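/- arXiv:1107.1066 — 11 statements merged into one kernel-verified Lean document; each statement's English description precedes it below -/
import Mathlib

section
/- Let Π₀, Π₁, …, Π_{t−1} be F-linear subspaces (submodules) of the space Fin r → F, and let v : Fin r → F be a vector with v ∉ Πᵢ for every i = 0, …, t−1. Then α(v) does not lie in the F-linear span of the union of the images α(Π₀) ∪ α(Π₁) ∪ … ∪ α(Π_{t−1}). -/
/-- **Theorem (Kantor-type span avoidance).**
If `W 0, …, W (t-1)` are `F`-linear subspaces of `Fin r → F` and `v` lies in none of
them, then `α v` is not in the `F`-span of the union of the images `α '' (W i)`. -/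
theorem stmt_0
    (q t r : ℕ) (ht : 1 ≤ t) (hr : 2 ≤ r)
    (F : Type*) [Field F] [Fintype F] (hF : Fintype.card F = q ^ t)
    (α : (Fin r → F) → (Fin t → Fin r) → F)
    (hα : ∀ v f, α v f = ∏ i : Fin t, v (f i) ^ q ^ (i : ℕ))
    (W : Fin t → Submodule F (Fin r → F))
    (v : Fin r → F) (hv : ∀ i, v ∉ W i) :
    α v ∉ Submodule.span F (⋃ i : Fin t, α '' (W i : Set (Fin r → F))) := by
  classical
  -- q is a power of the characteristic
  have hq2 : 2 ≤ q := by
    by_contra h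
    push_neg at h
    have : q ^ t ≤ 1 := by
      calc q ^ t ≤ 1 ^ t := Nat.pow_le_pow_left (by omega) t
      _ = 1 := one_pow t
    have := Fintype.one_lt_card (α := F)
    omega
  set p := ringChar F with hpdef
  haveI : CharP F p := ringChar.charP F
  have hp : p.Prime := CharP.char_is_prime F p
  haveI : Fact p.Prime := ⟨hp⟩
  obtain ⟨n, hn⟩ := FiniteField.card F p
  have hqdvd : q ∣ p ^ (n : ℕ) := by
    rw [← hn.2, hF]
    exact dvd_pow_self q (by omega)
  obtain ⟨k, -, hqpk⟩ := (Nat.dvd_prime_pow hp).mp hqdvd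
  -- frobenius: (x+y)^q = x^q+y^q via iterateFrobenius
  have hfrob : ∀ (m : ℕ) (s : Finset (Fin r)) (g : Fin r → F),
      (∑ x ∈ s, g x) ^ q ^ m = ∑ x ∈ s, (g x) ^ q ^ m := by
    intro m s g
    have : q ^ m = p ^ (k * m) := by rw [hqpk, ← pow_mul]
    rw [this]
    have h := map_sum (iterateFrobenius F p (k * m)) g s
    simp only [iterateFrobenius_def] at h
    exact h
  -- dual functionals
  have hφ : ∀ i : Fin t, ∃ φ : (Fin r → F) →ₗ[F] F,
      φ v ≠ 0 ∧ ∀ w ∈ W i, φ w = 0 := by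
    intro i
    obtain ⟨f, hf1, hf2⟩ := (W i).exists_dual_map_eq_bot_of_notMem (hv i) inferInstance
    refine ⟨f, hf1, fun w hw => ?_⟩
    have : f w ∈ (W i).map f := ⟨w, hw, rfl⟩
    rw [hf2] at this
    exact (Submodule.mem_bot F).mp this
  choose φ hφv hφW using hφ
  -- coefficients
  set c : Fin t → Fin r → F := fun i x => φ i (fun j => if x = j then 1 else 0) with hc
  have hφ_eq : ∀ (i : Fin t) (w : Fin r → F), φ i w = ∑ x : Fin r, w x * c i x := by
    intro i w
    rw [LinearMap.pi_apply_eq_sum_univ (φ i) w]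
    simp [hc, smul_eq_mul]
  -- the linear functional L
  set L : ((Fin t → Fin r) → F) →ₗ[F] F :=
    { toFun := fun g => ∑ f : Fin t → Fin r, (∏ i : Fin t, (c i (f i)) ^ q ^ (i : ℕ)) * g f
      map_add' := by
        intro g h
        simp [mul_add, Finset.sum_add_distrib]
      map_smul' := by
        intro a g
        simp [Finset.mul_sum, smul_eq_mul]
        congr 1
        funext f
        ring } with hL
  -- key computation
  have key : ∀ w : Fin r → F, L (α w) = ∏ i : Fin t, (φ i w) ^ q ^ (i : ℕ) := by
    intro w
    have : L (α w) = ∑ f : Fin t → Fin r, ∏ i : Fin t, (c i (f i) * w (f i)) ^ q ^ (i : ℕ) := by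
      simp only [hL, LinearMap.coe_mk, AddHom.coe_mk, hα]
      refine Finset.sum_congr rfl fun f _ => ?_
      rw [← Finset.prod_mul_distrib]
      exact Finset.prod_congr rfl fun i _ => (mul_pow _ _ _).symm
    rw [this]
    have := (Finset.prod_univ_sum (fun _ : Fin t => (Finset.univ : Finset (Fin r)))
      (fun i x => (c i x * w x) ^ q ^ (i : ℕ))).symm
    rw [Fintype.piFinset_univ] at this
    rw [this]
    refine Finset.prod_congr rfl fun i _ => ?_
    rw [hφ_eq, hfrob]
    refine Finset.sum_congr rfl fun x _ => ?_
    rw [mul_comm (c i x) (w x)]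
  -- L vanishes on generators
  have hgen : ∀ g ∈ (⋃ i : Fin t, α '' (W i : Set (Fin r → F))), L g = 0 := by
    intro g hg
    obtain ⟨i, hi⟩ := Set.mem_iUnion.mp hg
    obtain ⟨w, hw, rfl⟩ := hi
    rw [key]
    refine Finset.prod_eq_zero (Finset.mem_univ i) ?_
    rw [hφW i w hw]
    exact zero_pow (by positivity)
  -- conclude
  intro hmem
  have hker : Submodule.span F (⋃ i : Fin t, α '' (W i : Set (Fin r → F))) ≤ LinearMap.ker L := by
    rw [Submodule.span_le]
    intro g hg
    exact LinearMap.mem_ker.mpr (hgen g hg)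
  have h0 : L (α v) = 0 := hker hmem
  rw [key] at h0
  have : ∀ i : Fin t, (φ i v) ^ q ^ (i : ℕ) ≠ 0 := fun i => pow_ne_zero _ (hφv i)
  exact (Finset.prod_ne_zero_iff.mpr (fun i _ => this i)) h0
end

section
/- Let v₀, v₁, …, v_t be t+1 nonzero vectors in Fin r → F that are pairwise non-proportional over F (i.e., they represent t+1 distinct points of PG(r−1, q^t)). Then the family (α(v₀), α(v₁), …, α(v_t)) is linearly independent over F. (Equivalently: any t+1 points of the variety V_{r,t} are in general position.) -/
open Finset

section AuxLemmas

variable {F : Type*} [Field F]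

/-- If every functional vanishing on `w` also vanishes on `x`, then `x` is a multiple of `w`. -/
lemma stmt1_dotAux {r : ℕ} (w x : Fin r → F) (hw : w ≠ 0)
    (h : ∀ u : Fin r → F, (∑ k, u k * w k) = 0 → (∑ k, u k * x k) = 0) :
    ∃ c : F, x = c • w := by
  obtain ⟨k0, hk0⟩ : ∃ k0, w k0 ≠ 0 := by
    by_contra hc
    push_neg at hc
    exact hw (funext fun k => hc k)
  refine ⟨x k0 / w k0, funext fun k => ?_⟩
  have hu := h (fun j => w k0 * (if j = k then 1 else 0) - w k * (if j = k0 then 1 else 0)) ?_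
  · have h1 : (∑ j, ((fun j => w k0 * (if j = k then 1 else 0) - w k * (if j = k0 then 1 else 0)) j * x j))
        = w k0 * x k - w k * x k0 := by
      simp [sub_mul, Finset.sum_sub_distrib, mul_assoc, ite_mul, Finset.sum_ite_eq']
    rw [h1] at hu
    have h2 : w k0 * x k = w k * x k0 := sub_eq_zero.mp hu
    rw [Pi.smul_apply, smul_eq_mul, div_mul_eq_mul_div, eq_div_iff hk0]
    linear_combination h2
  · have h2 : (∑ j, ((fun j => w k0 * (if j = k then 1 else 0) - w k * (if j = k0 then 1 else 0)) j * w j))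
        = w k0 * w k - w k * w k0 := by
      simp [sub_mul, Finset.sum_sub_distrib, mul_assoc, ite_mul, Finset.sum_ite_eq']
    rw [h2]
    ring

/-- Avoidance lemma: a functional vanishing on `w` but not on finitely many
vectors independent from `w`. -/
lemma stmt1_avoid [Fintype F] {r n : ℕ} (w : Fin r → F) (hw : w ≠ 0)
    (xs : Fin n → Fin r → F)
    (hxs : ∀ i (c : F), xs i ≠ c • w)
    (hn : n < Fintype.card F) :
    ∃ u : Fin r → F, (∑ k, u k * w k) = 0 ∧ ∀ i, (∑ k, u k * xs i k) ≠ 0 := by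
  classical
  suffices H : ∀ S : Finset (Fin n), S.card < Fintype.card F →
      ∃ u : Fin r → F, (∑ k, u k * w k) = 0 ∧ ∀ i ∈ S, (∑ k, u k * xs i k) ≠ 0 by
    obtain ⟨u, hu1, hu2⟩ := H Finset.univ (by simpa using hn)
    exact ⟨u, hu1, fun i => hu2 i (Finset.mem_univ i)⟩
  intro S
  induction S using Finset.induction with
  | empty => exact fun _ => ⟨0, by simp, by simp⟩
  | @insert a S ha ih =>
    intro hcard
    obtain ⟨u, hu1, hu2⟩ := ih (lt_of_le_of_lt (Finset.card_le_card (Finset.subset_insert a S)) hcard)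
    -- get u' with u'⬝w = 0 and u'⬝xs a ≠ 0
    obtain ⟨u', hu'1, hu'2⟩ : ∃ u' : Fin r → F, (∑ k, u' k * w k) = 0 ∧ (∑ k, u' k * xs a k) ≠ 0 := by
      by_contra hcon
      push_neg at hcon
      obtain ⟨c, hc⟩ := stmt1_dotAux w (xs a) hw (fun u hu => hcon u hu)
      exact hxs a c hc
    set bad : Fin n → F := fun i => -(∑ k, u k * xs i k) / (∑ k, u' k * xs i k) with hbad
    set T : Finset F := insert (bad a) (S.image bad) with hT
    have hTcard : T.card < Fintype.card F := by
      calc T.card ≤ (S.image bad).card + 1 := Finset.card_insert_le _ _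
        _ ≤ S.card + 1 := by gcongr; exact Finset.card_image_le
        _ = (insert a S).card := (Finset.card_insert_of_notMem ha).symm
        _ < Fintype.card F := hcard
    obtain ⟨c, hc⟩ : ∃ c : F, c ∉ T := by
      by_contra hcon
      push_neg at hcon
      have : (Finset.univ : Finset F) ⊆ T := fun x _ => hcon x
      exact absurd (Finset.card_le_card this) (by simpa using hTcard.not_ge)
    refine ⟨u + c • u', ?_, ?_⟩
    · have hsp : ∑ k, (u + c • u') k * w k = (∑ k, u k * w k) + c * ∑ k, u' k * w k := by
        rw [Finset.mul_sum, ← Finset.sum_add_distrib]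
        exact Finset.sum_congr rfl fun k _ => by simp only [Pi.add_apply, Pi.smul_apply, smul_eq_mul]; ring
      rw [hsp, hu1, hu'1]
      ring
    · intro i hi
      have hsplit : ∑ k, (u k + c * u' k) * xs i k
          = (∑ k, u k * xs i k) + c * ∑ k, u' k * xs i k := by
        rw [Finset.mul_sum, ← Finset.sum_add_distrib]
        exact Finset.sum_congr rfl fun k _ => by ring
      show (∑ k, (u + c • u') k * xs i k) ≠ 0
      have hsplit' : (∑ k, (u + c • u') k * xs i k)
          = (∑ k, u k * xs i k) + c * ∑ k, u' k * xs i k := by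
        simpa [Pi.add_apply, Pi.smul_apply, smul_eq_mul] using hsplit
      rw [hsplit']
      rcases Finset.mem_insert.mp hi with rfl | hiS
      · intro h0
        apply hc
        have hcb : c = bad i := by
          rw [hbad]
          field_simp
          linear_combination h0
        rw [hT, hcb]
        exact Finset.mem_insert_self _ _
      · by_cases hB : (∑ k, u' k * xs i k) = 0
        · rw [hB] at *
          simpa [hB] using hu2 i hiS
        · intro h0
          apply hc
          have hcb : c = bad i := by
            rw [hbad]
            field_simp
            linear_combination h0
          rw [hT, hcb]
          exact Finset.mem_insert.mpr (Or.inr (Finset.mem_image_of_mem bad hiS))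

end AuxLemmas

section Main
variable {F : Type*} [Field F] [Fintype F]

lemma stmt1_aux {q r t : ℕ} (p m : ℕ) [Fact p.Prime] [CharP F p]
    (hqm : q = p ^ m)
    (hpc : ∀ a : F, a ^ q ^ t = a)
    (hq1 : 1 ≤ q) (ht : 1 ≤ t) (htF : t < Fintype.card F) :
    ∀ s, s ≤ t → ∀ v : Fin (s + 1) → Fin r → F, (∀ i, v i ≠ 0) →
      (∀ i j, i ≠ j → ∀ c : F, v i ≠ c • v j) →
      ∀ c : Fin (s + 1) → F,
        (∀ g : Fin s → Fin r, ∑ i, c i * ∏ j : Fin s, v i (g j) ^ q ^ (j : ℕ) = 0) →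
        ∀ i, c i = 0 := by
  intro s
  induction s with
  | zero =>
    intro _ v _ _ c hc i
    have h0 := hc Fin.elim0
    simp at h0
    have : i = 0 := Fin.eq_zero i
    rw [this]
    exact h0
  | succ s ih =>
    intro hst v hv0 hvdist c hc
    -- the functional u
    have hlast_ne : ∀ i : Fin (s + 1), i.castSucc ≠ Fin.last (s + 1) :=
      fun i => Fin.ne_of_lt (Fin.castSucc_lt_last i)
    obtain ⟨u, hu1, hu2⟩ := stmt1_avoid (v (Fin.last (s + 1)))
      (hv0 _) (fun i : Fin (s + 1) => v i.castSucc)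
      (fun i cc => hvdist i.castSucc (Fin.last (s + 1)) (hlast_ne i) cc)
      (lt_of_le_of_lt (Nat.succ_le_of_lt (Nat.lt_of_lt_of_le (Nat.lt_succ_self s) hst)) htF)
    -- contraction
    have key : ∀ g : Fin s → Fin r,
        ∑ i : Fin (s + 2), (c i * ∑ k, u k * v i k) * (∏ j : Fin s, v i (g j) ^ q ^ (j : ℕ)) ^ q = 0 := by
      intro g
      have hP : ∀ (i : Fin (s + 2)) (k : Fin r),
          ∏ j : Fin (s + 1), v i (Fin.cons (α := fun _ => Fin r) k g j) ^ q ^ (j : ℕ)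
            = v i k * (∏ j : Fin s, v i (g j) ^ q ^ (j : ℕ)) ^ q := by
        intro i k
        rw [Fin.prod_univ_succ]
        simp only [Fin.cons_zero, Fin.cons_succ, Fin.val_zero, pow_zero, pow_one, Fin.val_succ]
        congr 1
        rw [← Finset.prod_pow]
        exact Finset.prod_congr rfl fun j _ => by rw [← pow_mul, ← pow_succ]
      have h2 : ∑ k : Fin r, u k * ∑ i : Fin (s + 2),
          c i * ∏ j : Fin (s + 1), v i (Fin.cons (α := fun _ => Fin r) k g j) ^ q ^ (j : ℕ) = 0 := by
        simp [hc]
      calc ∑ i : Fin (s + 2), (c i * ∑ k, u k * v i k) * (∏ j : Fin s, v i (g j) ^ q ^ (j : ℕ)) ^ q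
          = ∑ i : Fin (s + 2), ∑ k : Fin r,
              u k * (c i * ∏ j : Fin (s + 1), v i (Fin.cons (α := fun _ => Fin r) k g j) ^ q ^ (j : ℕ)) := by
            refine Finset.sum_congr rfl fun i _ => ?_
            simp only [hP]
            rw [Finset.mul_sum, Finset.sum_mul]
            exact Finset.sum_congr rfl fun k _ => by ring
        _ = ∑ k : Fin r, u k * ∑ i : Fin (s + 2),
              c i * ∏ j : Fin (s + 1), v i (Fin.cons (α := fun _ => Fin r) k g j) ^ q ^ (j : ℕ) := by
            rw [Finset.sum_comm]
            exact Finset.sum_congr rfl fun k _ => by rw [Finset.mul_sum]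
        _ = 0 := h2
    -- raise to the power q^(t-1)
    have hqt : q * q ^ (t - 1) = q ^ t := by
      rw [← pow_succ']
      congr 1
      omega
    have e1 : p ^ (m * (t - 1)) = q ^ (t - 1) := by rw [hqm, pow_mul]
    have hqtz : q ^ (t - 1) ≠ 0 := pow_ne_zero _ (by omega)
    have key2 : ∀ g : Fin s → Fin r,
        ∑ i : Fin (s + 1),
          ((c i.castSucc * ∑ k, u k * v i.castSucc k) ^ q ^ (t - 1)) *
            (∏ j : Fin s, v i.castSucc (g j) ^ q ^ (j : ℕ)) = 0 := by
      intro g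
      have h3 := congrArg (· ^ p ^ (m * (t - 1))) (key g)
      rw [sum_pow_char_pow, zero_pow (e1 ▸ hqtz)] at h3
      have term_eq : ∀ i : Fin (s + 2),
          ((c i * ∑ k, u k * v i k) * (∏ j : Fin s, v i (g j) ^ q ^ (j : ℕ)) ^ q) ^ p ^ (m * (t - 1))
            = (c i * ∑ k, u k * v i k) ^ q ^ (t - 1) * (∏ j : Fin s, v i (g j) ^ q ^ (j : ℕ)) := by
        intro i
        rw [e1, mul_pow, ← pow_mul, hqt, hpc]
      have h4 : ∑ i : Fin (s + 2), (c i * ∑ k, u k * v i k) ^ q ^ (t - 1) *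
          (∏ j : Fin s, v i (g j) ^ q ^ (j : ℕ)) = 0 := by
        rw [← h3]
        exact Finset.sum_congr rfl fun i _ => (term_eq i).symm
      rw [Fin.sum_univ_castSucc] at h4
      have hlz : (c (Fin.last (s + 1)) * ∑ k, u k * v (Fin.last (s + 1)) k) ^ q ^ (t - 1) *
          (∏ j : Fin s, v (Fin.last (s + 1)) (g j) ^ q ^ (j : ℕ)) = 0 := by
        rw [hu1, mul_zero, zero_pow hqtz, zero_mul]
      rw [hlz, add_zero] at h4
      exact h4
    -- apply induction hypothesis
    have hz : ∀ i : Fin (s + 1), (c i.castSucc * ∑ k, u k * v i.castSucc k) ^ q ^ (t - 1) = 0 := by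
      apply ih (le_trans (Nat.le_succ s) hst) (fun i => v i.castSucc)
        (fun i => hv0 _)
        (fun i j hij cc => hvdist i.castSucc j.castSucc (fun h => hij (Fin.castSucc_injective _ h)) cc)
      exact key2
    have hcz : ∀ i : Fin (s + 1), c i.castSucc = 0 := by
      intro i
      have := pow_eq_zero_iff hqtz |>.mp (hz i)
      rcases mul_eq_zero.mp this with h | h
      · exact h
      · exact absurd h (hu2 i)
    -- last coefficient
    obtain ⟨k0, hk0⟩ : ∃ k0, v (Fin.last (s + 1)) k0 ≠ 0 := by
      by_contra hcon
      push_neg at hcon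
      exact hv0 (Fin.last (s + 1)) (funext fun k => hcon k)
    have hlast := hc (fun _ => k0)
    rw [Fin.sum_univ_castSucc] at hlast
    have hzero : ∑ i : Fin (s + 1), c i.castSucc *
        ∏ j : Fin (s + 1), v i.castSucc k0 ^ q ^ (j : ℕ) = 0 := by
      refine Finset.sum_eq_zero fun i _ => by rw [hcz i, zero_mul]
    rw [hzero, zero_add] at hlast
    have hprod : ∏ j : Fin (s + 1), v (Fin.last (s + 1)) k0 ^ q ^ (j : ℕ) ≠ 0 :=
      Finset.prod_ne_zero_iff.mpr fun j _ => pow_ne_zero _ hk0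
    have hclast : c (Fin.last (s + 1)) = 0 := by
      rcases mul_eq_zero.mp hlast with h | h
      · exact h
      · exact absurd h hprod
    intro i
    rcases Fin.eq_castSucc_or_eq_last i with ⟨j, rfl⟩ | rfl
    · exact hcz j
    · exact hclast

end Main



/-- **Corollary.** Any `t+1` points of the variety `V_{r,t}` are in general position:
if `v 0, …, v t` are nonzero and pairwise non-proportional over `F` (i.e. they represent
`t+1` distinct points of `PG(r-1, q^t)`), then `(α (v 0), …, α (v t))` is linearly
independent over `F`. -/
theorem stmt_1
    (q t r : ℕ) (ht : 1 ≤ t) (hr : 2 ≤ r)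
    (F : Type*) [Field F] [Fintype F] (hF : Fintype.card F = q ^ t)
    (α : (Fin r → F) → (Fin t → Fin r) → F)
    (hα : ∀ v f, α v f = ∏ i : Fin t, v (f i) ^ q ^ (i : ℕ))
    (v : Fin (t + 1) → (Fin r → F))
    (hv0 : ∀ i, v i ≠ 0)
    (hvdist : ∀ i j, i ≠ j → ∀ c : F, v i ≠ c • v j) :
    LinearIndependent F (fun i => α (v i)) := by
  classical
  set p := ringChar F with hp_def
  haveI : CharP F p := ringChar.charP F
  have hp : p.Prime := CharP.char_is_prime F p
  haveI : Fact p.Prime := ⟨hp⟩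
  obtain ⟨n, hpn, hcard⟩ := FiniteField.card F p
  have h2card : 1 < Fintype.card F := Fintype.one_lt_card
  have hq2 : 2 ≤ q := by
    by_contra h
    push_neg at h
    have hle : q ^ t ≤ 1 := by
      calc q ^ t ≤ 1 ^ t := Nat.pow_le_pow_left (by omega) t
        _ = 1 := one_pow t
    omega
  have hqdvd : q ∣ p ^ (n : ℕ) := by
    rw [← hcard, hF]
    exact dvd_pow_self q (by omega)
  obtain ⟨m, hmn, hqm⟩ := (Nat.dvd_prime_pow hpn).mp hqdvd
  have hpc : ∀ a : F, a ^ q ^ t = a := by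
    intro a
    rw [← hF]
    exact FiniteField.pow_card a
  have htF : t < Fintype.card F := by
    rw [hF]
    calc t < 2 ^ t := Nat.lt_two_pow_self
      _ ≤ q ^ t := Nat.pow_le_pow_left hq2 t
  rw [Fintype.linearIndependent_iff]
  intro cf hsum
  apply stmt1_aux p m hqm hpc (by omega) ht htF t le_rfl v hv0 hvdist cf
  intro g
  have := congrFun hsum g
  simp only [Finset.sum_apply, Pi.smul_apply, smul_eq_mul, Pi.zero_apply] at this
  rw [← this]
  exact Finset.sum_congr rfl fun i _ => by rw [hα]
end

section
/- For a matrix M ∈ Matrix (Fin r) (Fin r) F, define the twisted tensor matrix M^⊗ ∈ Matrix (Fin t → Fin r) (Fin t → Fin r) F by M^⊗(f, h) = ∏_{i=0}^{t-1} M(f(i), h(i))^{q^i}. Then for every vector v : Fin r → F, α(M.mulVec v) = M^⊗.mulVec (α(v)). (In particular the action of PGL(r, q^t) on PG(r−1, q^t) lifts through α to a linear action on the ambient space of V_{r,t}.) -/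
/-- **Twisted tensor product of matrices.** For `M : Matrix (Fin r) (Fin r) F`
define `M^⊗` by `M^⊗ f h = ∏ i, (M (f i) (h i))^(q^i)`. Then
`α (M.mulVec v) = M^⊗.mulVec (α v)` for every `v`; thus the action of `PGL(r,q^t)`
lifts through `α` to a linear action on the ambient space of `V_{r,t}`. -/
theorem stmt_3
    (q t r : ℕ) (ht : 1 ≤ t) (hr : 2 ≤ r)
    (F : Type*) [Field F] [Fintype F] (hF : Fintype.card F = q ^ t)
    (α : (Fin r → F) → (Fin t → Fin r) → F)
    (hα : ∀ v f, α v f = ∏ i : Fin t, v (f i) ^ q ^ (i : ℕ))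
    (M : Matrix (Fin r) (Fin r) F)
    (N : Matrix (Fin t → Fin r) (Fin t → Fin r) F)
    (hN : ∀ f h, N f h = ∏ i : Fin t, (M (f i) (h i)) ^ q ^ (i : ℕ)) :
    ∀ v : Fin r → F, α (M.mulVec v) = N.mulVec (α v) := by
  -- Obtain the characteristic
  obtain ⟨p, hpi⟩ := CharP.exists F
  haveI := hpi
  have hp : p.Prime := CharP.char_is_prime F p
  haveI := Fact.mk hp
  obtain ⟨n, -, hcard⟩ := FiniteField.card F p
  -- q is a power of p
  have hqdvd : q ∣ p ^ (n : ℕ) := by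
    rw [← hcard, hF]
    exact dvd_pow_self q (by omega)
  obtain ⟨m, -, hq⟩ := (Nat.dvd_prime_pow hp).mp hqdvd
  haveI : ExpChar F p := ExpChar.prime hp
  -- the q^i-power map is additive
  have key : ∀ (i : ℕ) (x : Fin r → F),
      (∑ j, x j) ^ q ^ i = ∑ j, (x j) ^ q ^ i := by
    intro i x
    rw [hq, ← pow_mul]
    exact map_sum (iterateFrobenius F p (m * i)) x Finset.univ
  intro v
  funext f
  rw [hα, Matrix.mulVec]
  simp only [dotProduct, hN, hα, Matrix.mulVec]
  calc ∏ i : Fin t, (∑ j, M (f i) j * v j) ^ q ^ (i : ℕ)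
      = ∏ i : Fin t, ∑ j, (M (f i) j * v j) ^ q ^ (i : ℕ) := by
        refine Finset.prod_congr rfl fun i _ => ?_
        exact key i (fun j => M (f i) j * v j)
    _ = ∑ h ∈ Fintype.piFinset (fun _ : Fin t => (Finset.univ : Finset (Fin r))),
          ∏ i : Fin t, (M (f i) (h i) * v (h i)) ^ q ^ (i : ℕ) :=
        Finset.prod_univ_sum _ _
    _ = ∑ h : Fin t → Fin r,
          (∏ i : Fin t, M (f i) (h i) ^ q ^ (i : ℕ)) *
            ∏ i : Fin t, v (h i) ^ q ^ (i : ℕ) := by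
        rw [Fintype.piFinset_univ]
        refine Finset.sum_congr rfl fun h _ => ?_
        rw [← Finset.prod_mul_distrib]
        exact Finset.prod_congr rfl fun i _ => mul_pow _ _ _
end

section
/- The map α is injective on projective points: if v, w : Fin r → F are nonzero vectors such that α(v) = c • α(w) for some nonzero c ∈ F, then v = d • w for some nonzero d ∈ F. -/
lemma stmt_5_aux {F : Type*} [CommMonoid F] (t q : ℕ) (ht : 1 ≤ t) (x y : F) :
    (∏ i : Fin t, (if i = (⟨0, ht⟩ : Fin t) then x else y) ^ q ^ (i : ℕ))
      = x * ∏ i ∈ Finset.univ.erase (⟨0, ht⟩ : Fin t), y ^ q ^ (i : ℕ) := by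
  rw [← Finset.mul_prod_erase Finset.univ _ (Finset.mem_univ (⟨0, ht⟩ : Fin t))]
  congr 1
  · simp
  · exact Finset.prod_congr rfl fun i hi => by rw [if_neg (Finset.mem_erase.mp hi).1]

/-- **Injectivity of `α` on projective points.** If `v, w` are nonzero and
`α v = c • α w` for some nonzero `c ∈ F`, then `v = d • w` for some nonzero `d ∈ F`,
i.e. `v` and `w` represent the same point of `PG(r-1, q^t)`. -/
theorem stmt_5
    (q t r : ℕ) (ht : 1 ≤ t) (hr : 2 ≤ r)
    (F : Type*) [Field F] [Fintype F] (hF : Fintype.card F = q ^ t)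
    (α : (Fin r → F) → (Fin t → Fin r) → F)
    (hα : ∀ v f, α v f = ∏ i : Fin t, v (f i) ^ q ^ (i : ℕ))
    (v w : Fin r → F) (hv : v ≠ 0) (hw : w ≠ 0)
    (c : F) (hc : c ≠ 0) (h : α v = c • α w) :
    ∃ d : F, d ≠ 0 ∧ v = d • w := by
  obtain ⟨j0, hj0⟩ := Function.ne_iff.mp hw
  simp only [Pi.zero_apply] at hj0
  set i0 : Fin t := ⟨0, ht⟩ with hi0
  set P : F := ∏ i ∈ Finset.univ.erase i0, v j0 ^ q ^ (i : ℕ) with hP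
  set Q : F := ∏ i ∈ Finset.univ.erase i0, w j0 ^ q ^ (i : ℕ) with hQ
  have key : ∀ j : Fin r, v j * P = c * (w j * Q) := by
    intro j
    have h1 := congrFun h (fun i => if i = i0 then j else j0)
    simp only [hα, Pi.smul_apply, smul_eq_mul, apply_ite v, apply_ite w] at h1
    rwa [stmt_5_aux t q ht, stmt_5_aux t q ht] at h1
  have hQ0 : Q ≠ 0 := Finset.prod_ne_zero_iff.mpr fun i _ => pow_ne_zero _ hj0
  have hP0 : P ≠ 0 := by
    intro h0
    have := key j0
    rw [h0, mul_zero] at this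
    exact (mul_ne_zero hc (mul_ne_zero hj0 hQ0)) this.symm
  refine ⟨c * Q / P, div_ne_zero (mul_ne_zero hc hQ0) hP0, ?_⟩
  funext j
  have := key j
  simp only [Pi.smul_apply, smul_eq_mul]
  field_simp
  linear_combination this
end

section
/- The F-linear span of the range of α is the whole space (Fin t → Fin r) → F; that is, Submodule.span F (Set.range α) = ⊤. Equivalently, the variety V_{r,t} is not contained in any hyperplane, so the parity-check matrix H whose columns are the vectors α(P) for P ranging over the points of PG(r−1, q^t) has maximal rank r^t. -/
open Finset

lemma geomlt {q : ℕ} (hq : 2 ≤ q) : ∀ n, ∑ i ∈ Finset.range n, q ^ i < q ^ n := by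
  intro n
  induction n with
  | zero => simp
  | succ n ih =>
    rw [Finset.sum_range_succ, pow_succ]
    calc ∑ i ∈ Finset.range n, q ^ i + q ^ n < q ^ n + q ^ n := by omega
    _ = q ^ n * 2 := by ring
    _ ≤ q ^ n * q := by exact Nat.mul_le_mul_left _ hq

lemma powsum_inj {q : ℕ} (hq : 2 ≤ q) (A : Finset ℕ) :
    ∀ B : Finset ℕ, (∑ i ∈ A, q ^ i) = (∑ i ∈ B, q ^ i) → A = B := by
  induction A using Finset.strongInductionOn with
  | _ A ih =>
    intro B hAB
    have hposterm : ∀ i : ℕ, 0 < q ^ i := fun i => pow_pos (by omega) i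
    rcases A.eq_empty_or_nonempty with rfl | hA
    · simp only [Finset.sum_empty] at hAB
      rcases B.eq_empty_or_nonempty with rfl | hB
      · rfl
      · have : 0 < ∑ i ∈ B, q ^ i := Finset.sum_pos (fun i _ => hposterm i) hB
        omega
    · have hB : B.Nonempty := by
        rcases B.eq_empty_or_nonempty with rfl | h
        · simp only [Finset.sum_empty] at hAB
          have : 0 < ∑ i ∈ A, q ^ i := Finset.sum_pos (fun i _ => hposterm i) hA
          omega
        · exact h
      -- bounds
      have bound : ∀ (C : Finset ℕ) (hC : C.Nonempty),
          q ^ (C.max' hC) ≤ ∑ i ∈ C, q ^ i ∧ ∑ i ∈ C, q ^ i < q ^ (C.max' hC + 1) := by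
        intro C hC
        constructor
        · exact Finset.single_le_sum (fun i _ => Nat.zero_le _) (C.max'_mem hC)
        · calc ∑ i ∈ C, q ^ i ≤ ∑ i ∈ Finset.range (C.max' hC + 1), q ^ i := by
                apply Finset.sum_le_sum_of_subset
                intro x hx
                simp only [Finset.mem_range]
                exact Nat.lt_succ_of_le (Finset.le_max' C x hx)
          _ < q ^ (C.max' hC + 1) := geomlt hq _
      have hmax : A.max' hA = B.max' hB := by
        by_contra hne
        rcases Nat.lt_or_ge (A.max' hA) (B.max' hB) with h | h
        · have h1 := (bound A hA).2
          have h2 := (bound B hB).1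
          have : q ^ (A.max' hA + 1) ≤ q ^ (B.max' hB) :=
            Nat.pow_le_pow_right (by omega) h
          omega
        · have h' : B.max' hB < A.max' hA := by omega
          have h1 := (bound B hB).2
          have h2 := (bound A hA).1
          have : q ^ (B.max' hB + 1) ≤ q ^ (A.max' hA) :=
            Nat.pow_le_pow_right (by omega) h'
          omega
      set a := A.max' hA with ha
      have haA : a ∈ A := A.max'_mem hA
      have haB : a ∈ B := hmax ▸ B.max'_mem hB
      have hsum : ∑ i ∈ A.erase a, q ^ i = ∑ i ∈ B.erase a, q ^ i := by
        have e1 := Finset.add_sum_erase A (fun i => q ^ i) haA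
        have e2 := Finset.add_sum_erase B (fun i => q ^ i) haB
        beta_reduce at e1 e2
        omega
      have := ih (A.erase a) (Finset.erase_ssubset haA) (B.erase a) hsum
      rw [← Finset.insert_erase haA, ← Finset.insert_erase haB, this]

lemma key_aux (q t r : ℕ) (hq : 2 ≤ q)
    (F : Type u) [Field F] [Fintype F] (hF : Fintype.card F = q ^ t)
    (c : (Fin t → Fin r) → F)
    (hc : ∀ v : Fin r → F, ∑ g : Fin t → Fin r, (∏ i : Fin t, v (g i) ^ q ^ (i : ℕ)) * c g = 0) :
    ∀ g, c g = 0 := by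
  classical
  set σ := ULift.{u} (Fin r) with hσ
  -- exponent encoding
  set m : (Fin t → Fin r) → (σ →₀ ℕ) :=
    fun g => ∑ i : Fin t, Finsupp.single (ULift.up (g i)) (q ^ (i : ℕ)) with hm
  have hmapply : ∀ g (j : Fin r), m g (ULift.up j)
      = ∑ x ∈ (Finset.univ.filter (fun i : Fin t => g i = j)).image Fin.val, q ^ x := by
    intro g j
    rw [hm]
    rw [Finsupp.finset_sum_apply]
    rw [Finset.sum_image (fun a _ b _ h => Fin.val_injective h)]
    rw [Finset.sum_filter]
    apply Finset.sum_congr rfl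
    intro i _
    rw [Finsupp.single_apply]
    by_cases h : g i = j
    · simp [h]
    · have hne : (ULift.up (g i) : σ) ≠ ULift.up j := fun hh => h (congrArg ULift.down hh)
      simp [hne, h]
  have hminj : Function.Injective m := by
    intro g g' h
    funext i
    have hS : ∀ j : Fin r,
        (Finset.univ.filter (fun i : Fin t => g i = j)).image Fin.val
          = (Finset.univ.filter (fun i : Fin t => g' i = j)).image Fin.val := by
      intro j
      apply powsum_inj hq
      rw [← hmapply, ← hmapply, h]
    have := hS (g i)
    have hmem : (i : ℕ) ∈ (Finset.univ.filter (fun i' : Fin t => g i' = g i)).image Fin.val := by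
      simp only [Finset.mem_image, Finset.mem_filter, Finset.mem_univ, true_and]
      exact ⟨i, rfl, rfl⟩
    rw [this] at hmem
    simp only [Finset.mem_image, Finset.mem_filter, Finset.mem_univ, true_and] at hmem
    obtain ⟨i', hi', hval⟩ := hmem
    have : i' = i := Fin.val_injective hval
    subst this
    exact hi'.symm
  -- the polynomial
  set P : MvPolynomial σ F := ∑ g : Fin t → Fin r, MvPolynomial.monomial (m g) (c g) with hP
  have heval : ∀ w : σ → F, MvPolynomial.eval w P = 0 := by
    intro w
    rw [hP, map_sum]
    have : ∀ g : Fin t → Fin r, MvPolynomial.eval w (MvPolynomial.monomial (m g) (c g))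
        = (∏ i : Fin t, w (ULift.up (g i)) ^ q ^ (i : ℕ)) * c g := by
      intro g
      rw [hm, MvPolynomial.monomial_sum_index, map_mul, MvPolynomial.eval_C, map_prod]
      rw [mul_comm]
      congr 1
      apply Finset.prod_congr rfl
      intro i _
      rw [← MvPolynomial.X_pow_eq_monomial, map_pow, MvPolynomial.eval_X]
    rw [Finset.sum_congr rfl (fun g _ => this g)]
    exact hc (fun j => w (ULift.up j))
  have hdeg : P ∈ MvPolynomial.restrictDegree σ F (Fintype.card F - 1) := by
    apply Submodule.sum_mem
    intro g _
    rw [MvPolynomial.mem_restrictDegree]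
    intro s hs x
    have := MvPolynomial.support_monomial_subset hs
    simp only [Finset.mem_singleton] at this
    subst this
    have h1 : (m g) x ≤ ∑ i : Fin t, q ^ (i : ℕ) := by
      rw [hm, Finsupp.finset_sum_apply]
      apply Finset.sum_le_sum
      intro i _
      rw [Finsupp.single_apply]
      split <;> omega
    have h2 : ∑ i : Fin t, q ^ (i : ℕ) ≤ q ^ t - 1 := by
      rw [Fin.sum_univ_eq_sum_range]
      have := geomlt hq t
      omega
    rw [hF]
    omega
  have hP0 : P = 0 := MvPolynomial.eq_zero_of_eval_eq_zero σ F P heval hdeg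
  intro g
  have : MvPolynomial.coeff (m g) P = c g := by
    rw [hP, MvPolynomial.coeff_sum]
    rw [Finset.sum_eq_single g]
    · rw [MvPolynomial.coeff_monomial, if_pos rfl]
    · intro g' _ hne
      rw [MvPolynomial.coeff_monomial, if_neg (fun h => hne (hminj h))]
    · intro h
      exact absurd (Finset.mem_univ g) h
  rw [hP0] at this
  simpa using this.symm

/-- **`V_{r,t}` spans the ambient space.** The `F`-linear span of the range of `α`
is all of `(Fin t → Fin r) → F`; equivalently, the variety `V_{r,t}` is contained in
no hyperplane, so the parity-check matrix whose columns are the vectors `α P`, for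
`P` ranging over the points of `PG(r-1, q^t)`, has maximal rank `r^t`. -/
theorem stmt_6
    (q t r : ℕ) (ht : 1 ≤ t) (hr : 2 ≤ r)
    (F : Type*) [Field F] [Fintype F] (hF : Fintype.card F = q ^ t)
    (α : (Fin r → F) → (Fin t → Fin r) → F)
    (hα : ∀ v f, α v f = ∏ i : Fin t, v (f i) ^ q ^ (i : ℕ)) :
    Submodule.span F (Set.range α) = ⊤ := by
  classical
  have hq : 2 ≤ q := by
    by_contra h
    have hq1 : q ≤ 1 := by omega
    have : q ^ t ≤ 1 := by
      calc q ^ t ≤ 1 ^ t := Nat.pow_le_pow_left hq1 t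
      _ = 1 := one_pow t
    have h2 : 2 ≤ Fintype.card F := Fintype.one_lt_card
    omega
  by_contra hne
  have hlt : Submodule.span F (Set.range α) < ⊤ := lt_top_iff_ne_top.mpr hne
  obtain ⟨φ, hφne, hφmap⟩ :=
    Submodule.exists_dual_map_eq_bot_of_lt_top hlt inferInstance
  have hφ0 : ∀ v : Fin r → F, φ (α v) = 0 := by
    intro v
    have : φ (α v) ∈ (Submodule.span F (Set.range α)).map φ :=
      Submodule.mem_map_of_mem (Submodule.subset_span (Set.mem_range_self v))
    rw [hφmap] at this
    exact (Submodule.mem_bot F).mp this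
  set c : (Fin t → Fin r) → F := fun g => φ (fun g' => if g = g' then 1 else 0) with hc
  have hkey : ∀ v : Fin r → F,
      ∑ g : Fin t → Fin r, (∏ i : Fin t, v (g i) ^ q ^ (i : ℕ)) * c g = 0 := by
    intro v
    have := hφ0 v
    rw [LinearMap.pi_apply_eq_sum_univ φ (α v)] at this
    rw [← this]
    apply Finset.sum_congr rfl
    intro g _
    rw [smul_eq_mul, hα]
  have hc0 : ∀ g, c g = 0 := key_aux q t r hq F hF c hkey
  apply hφne
  apply LinearMap.ext
  intro x
  rw [LinearMap.pi_apply_eq_sum_univ φ x]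
  simp only [LinearMap.zero_apply]
  apply Finset.sum_eq_zero
  intro g _
  rw [smul_eq_mul]
  have := hc0 g
  rw [hc] at this
  simp only at this
  rw [this, mul_zero]
end

section
/- Assume t < q. The code C_{r,t} has F-dimension n − r^t, i.e., Module.finrank F C_{r,t} = n − r^t where n = (q^{rt} − 1)/(q^t − 1). -/
open Finset MvPolynomial

lemma aux_prod_X_pow {σ F ι : Type*} [CommSemiring F] (s : Finset ι) (g : ι → σ) (e : ι → ℕ) :
    (∏ i ∈ s, (MvPolynomial.X (g i) : MvPolynomial σ F) ^ e i)
      = MvPolynomial.monomial (∑ i ∈ s, Finsupp.single (g i) (e i)) 1 := by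
  classical
  induction s using Finset.induction with
  | empty => simp
  | insert _ _ h ih =>
    rw [Finset.prod_insert h, Finset.sum_insert h, ih, X_pow_eq_monomial, monomial_mul, one_mul]

universe u

lemma key_vanish (q t r : ℕ) (ht : 1 ≤ t) (hq2 : 2 ≤ q)
    (F : Type u) [Field F] [Fintype F] (hF : Fintype.card F = q ^ t)
    (lam : (Fin t → Fin r) → F)
    (hvan : ∀ v : Fin r → F, ∑ f : Fin t → Fin r, lam f * ∏ i : Fin t, v (f i) ^ q ^ (i : ℕ) = 0) :
    lam = 0 := by
  classical
  set σ := ULift.{u} (Fin r)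
  set M : (Fin t → Fin r) → (σ →₀ ℕ) :=
    fun f => ∑ i : Fin t, Finsupp.single (ULift.up (f i)) (q ^ (i : ℕ)) with hM
  have hMapply : ∀ f (j : σ), M f j
      = ∑ k ∈ (Finset.univ.filter (fun i : Fin t => ULift.up (f i) = j)).map Fin.valEmbedding,
          q ^ k := by
    intro f j
    rw [Finset.sum_map]
    simp [hM, Finsupp.finset_sum_apply, Finsupp.single_apply, Finset.sum_filter]
  have hMinj : Function.Injective M := by
    intro f g hfg
    funext i
    have h1 : ∀ j : σ,
        (Finset.univ.filter (fun i' : Fin t => ULift.up (f i') = j)).map Fin.valEmbedding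
          = (Finset.univ.filter (fun i' : Fin t => ULift.up (g i') = j)).map Fin.valEmbedding := by
      intro j
      refine Finset.geomSum_injective hq2 ?_
      show (∑ k ∈ _, q ^ k) = ∑ k ∈ _, q ^ k
      rw [← hMapply f j, ← hMapply g j, hfg]
    have hmem : i ∈ Finset.univ.filter (fun i' : Fin t => ULift.up (f i') = ULift.up (f i)) := by
      simp
    have hmem2 : (i : ℕ) ∈
        ((Finset.univ.filter (fun i' : Fin t => ULift.up (f i') = ULift.up (f i))).map
          Fin.valEmbedding) := Finset.mem_map_of_mem _ hmem
    rw [h1 (ULift.up (f i))] at hmem2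
    rw [Finset.mem_map] at hmem2
    obtain ⟨i', hi', he⟩ := hmem2
    have hii : i' = i := Fin.ext he
    subst hii
    rw [Finset.mem_filter] at hi'
    exact (ULift.up_injective hi'.2).symm
  set p : MvPolynomial σ F := ∑ f : Fin t → Fin r, MvPolynomial.monomial (M f) (lam f) with hp
  have hbound : ∀ f (j : σ), M f j ≤ Fintype.card F - 1 := by
    intro f j
    rw [hMapply, hF]
    have hlt : (∑ k ∈ (Finset.univ.filter
        (fun i : Fin t => ULift.up (f i) = j)).map Fin.valEmbedding, q ^ k) < q ^ t := by
      apply Nat.geomSum_lt hq2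
      intro k hk
      simp [Finset.mem_map] at hk
      obtain ⟨i, _, hii⟩ := hk
      omega
    omega
  have hdeg : p ∈ restrictDegree σ F (Fintype.card F - 1) := by
    rw [mem_restrictDegree]
    intro s hs j
    have := MvPolynomial.support_sum hs
    rw [Finset.mem_biUnion] at this
    obtain ⟨f, _, hsf⟩ := this
    have : s = M f := by
      by_cases hz : lam f = 0
      · simp [support_monomial, hz] at hsf
      · simp [support_monomial, hz] at hsf; exact hsf
    rw [this]; exact hbound f j
  have hpeval : ∀ v : σ → F, MvPolynomial.eval v p = 0 := by
    intro v
    rw [hp, map_sum]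
    rw [← hvan (fun j => v (ULift.up j))]
    apply Finset.sum_congr rfl
    intro f _
    have h2 : (MvPolynomial.monomial (M f) (lam f))
        = MvPolynomial.C (lam f) * ∏ i : Fin t, MvPolynomial.X (ULift.up (f i)) ^ q ^ (i : ℕ) := by
      rw [aux_prod_X_pow, C_mul_monomial, mul_one]
    rw [h2]
    simp [MvPolynomial.eval_prod]
  have hp0 : p = 0 := MvPolynomial.eq_zero_of_eval_eq_zero σ F p hpeval hdeg
  funext f
  have hc : lam f = MvPolynomial.coeff (M f) p := by
    rw [hp, MvPolynomial.coeff_sum]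
    rw [Finset.sum_eq_single f]
    · simp [MvPolynomial.coeff_monomial]
    · intro g _ hg
      rw [MvPolynomial.coeff_monomial, if_neg (fun h => hg (hMinj h))]
    · simp
  rw [Pi.zero_apply, hc, hp0, MvPolynomial.coeff_zero]



/-- **Dimension of the code `C_{r,t}`.** Assume `t < q`. The code
`C_{r,t} = {w : Fin n → F | ∑ i, w i • α (P i) = 0}`, where `P` enumerates the points
of `PG(r-1, q^t)` and `n = (q^{rt} - 1)/(q^t - 1)`, has `F`-dimension `n - r^t`. -/
theorem stmt_7
    (q t r n : ℕ) (ht : 1 ≤ t) (hr : 2 ≤ r) (hq : t < q)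
    (F : Type*) [Field F] [Fintype F] (hF : Fintype.card F = q ^ t)
    (α : (Fin r → F) → (Fin t → Fin r) → F)
    (hα : ∀ v f, α v f = ∏ i : Fin t, v (f i) ^ q ^ (i : ℕ))
    (hn : n = (q ^ (r * t) - 1) / (q ^ t - 1))
    (P : Fin n → (Fin r → F))
    (hP0 : ∀ i, P i ≠ 0)
    (hPdist : ∀ i j, i ≠ j → ∀ c : F, P i ≠ c • P j)
    (hPall : ∀ v : Fin r → F, v ≠ 0 → ∃ i, ∃ c : F, v = c • P i) :
    Module.finrank F
      ↥(LinearMap.ker (Fintype.linearCombination F (fun i => α (P i))))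
      = n - r ^ t := by
  classical
  have hq2 : 2 ≤ q := by omega
  set L := Fintype.linearCombination F (fun i => α (P i)) with hL
  have hrange : LinearMap.range L = ⊤ := by
    rw [hL, Fintype.range_linearCombination, eq_top_iff]
    intro w _
    rw [← Subspace.forall_mem_dualAnnihilator_apply_eq_zero_iff]
    intro φ hφ
    have hvals : ∀ i0, φ (α (P i0)) = 0 := fun i0 =>
      (Submodule.mem_dualAnnihilator φ).mp hφ _ (Submodule.subset_span ⟨i0, rfl⟩)
    set lam : (Fin t → Fin r) → F := fun f => φ (Pi.single f 1) with hlam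
    have hexpand : ∀ w : (Fin t → Fin r) → F, φ w = ∑ f, w f * lam f := by
      intro w
      conv_lhs => rw [pi_eq_sum_univ w]
      rw [map_sum]
      apply Finset.sum_congr rfl
      intro f _
      rw [map_smul, smul_eq_mul, hlam]
      congr 2
      funext j
      simp [Pi.single_apply, eq_comm]
    have hvan : ∀ v : Fin r → F,
        ∑ f : Fin t → Fin r, lam f * ∏ i : Fin t, v (f i) ^ q ^ (i : ℕ) = 0 := by
      intro v
      by_cases hv : v = 0
      · subst hv
        apply Finset.sum_eq_zero
        intro f _
        rw [Finset.prod_eq_zero (Finset.mem_univ (⟨0, ht⟩ : Fin t))]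
        · rw [mul_zero]
        · simp
      · obtain ⟨i0, c, hc⟩ := hPall v hv
        have h0 : ∑ f, lam f * α (P i0) f = 0 := by
          have h1 := hvals i0
          rw [hexpand] at h1
          rw [← h1]
          exact Finset.sum_congr rfl fun f _ => (mul_comm _ _)
        calc (∑ f : Fin t → Fin r, lam f * ∏ i : Fin t, v (f i) ^ q ^ (i : ℕ))
            = ∑ f : Fin t → Fin r,
                lam f * ((∏ i : Fin t, c ^ q ^ (i : ℕ)) * α (P i0) f) := by
              apply Finset.sum_congr rfl
              intro f _
              congr 1
              rw [hα, ← Finset.prod_mul_distrib]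
              apply Finset.prod_congr rfl
              intro i _
              rw [hc, Pi.smul_apply, smul_eq_mul, mul_pow]
          _ = (∏ i : Fin t, c ^ q ^ (i : ℕ)) * ∑ f, lam f * α (P i0) f := by
              rw [Finset.mul_sum]
              exact Finset.sum_congr rfl fun f _ => by ring
          _ = 0 := by rw [h0, mul_zero]
    have hlam0 : lam = 0 := by
      refine key_vanish q t r ht hq2 F hF lam ?_
      intro v
      rw [← hvan v]
    have hφ0 : φ = 0 := by
      apply LinearMap.ext
      intro w
      rw [hexpand, hlam0]
      simp
    rw [hφ0]
    rfl
  have h1 := LinearMap.finrank_range_add_finrank_ker L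
  rw [hrange] at h1
  rw [finrank_top, Module.finrank_fintype_fun_eq_card, Module.finrank_fintype_fun_eq_card,
    Fintype.card_fun, Fintype.card_fin, Fintype.card_fin, Fintype.card_fin] at h1
  omega
end

section
/- Every nonzero codeword of C_{r,t} has Hamming weight at least t + 2; that is, if w : Fin n → F satisfies ∑_i w(i) • α(P(i)) = 0 and w ≠ 0, then the number of indices i with w(i) ≠ 0 is at least t + 2. -/
open Finset Polynomial



/-- geometric sum bound -/
lemma geomsum_lt {q : ℕ} (hq : 2 ≤ q) (n : ℕ) : ∑ i ∈ Finset.range n, q ^ i < q ^ n := by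
  induction n with
  | zero => simp
  | succ n ih =>
    rw [Finset.sum_range_succ, pow_succ]
    have : q ^ n * 2 ≤ q ^ n * q := Nat.mul_le_mul_left _ hq
    omega

lemma sum_pow_lt {q : ℕ} (hq : 2 ≤ q) {n : ℕ} {S : Finset ℕ} (hS : ∀ i ∈ S, i < n) :
    ∑ i ∈ S, q ^ i < q ^ n :=
  lt_of_le_of_lt (Finset.sum_le_sum_of_subset (fun i hi => Finset.mem_range.2 (hS i hi)))
    (geomsum_lt hq n)

/-- injectivity of subset sums of powers of `q ≥ 2` -/
lemma sum_pow_inj {q : ℕ} (hq : 2 ≤ q) :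
    ∀ (n : ℕ) (S T : Finset ℕ), (∀ i ∈ S, i < n) → (∀ i ∈ T, i < n) →
      ∑ i ∈ S, q ^ i = ∑ i ∈ T, q ^ i → S = T := by
  intro n
  induction n with
  | zero =>
    intro S T hS hT _
    rw [Finset.eq_empty_of_forall_notMem (fun i hi => Nat.not_lt_zero i (hS i hi)),
      Finset.eq_empty_of_forall_notMem (fun i hi => Nat.not_lt_zero i (hT i hi))]
  | succ n ih =>
    intro S T hS hT hsum
    have hSe : ∀ i ∈ S.erase n, i < n := by
      intro i hi
      have := Finset.mem_of_mem_erase hi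
      have := Finset.ne_of_mem_erase hi
      have := hS i ‹i ∈ S›
      omega
    have hTe : ∀ i ∈ T.erase n, i < n := by
      intro i hi
      have := Finset.mem_of_mem_erase hi
      have := Finset.ne_of_mem_erase hi
      have := hT i ‹i ∈ T›
      omega
    have hkey : n ∈ S ↔ n ∈ T := by
      constructor
      · intro hnS
        by_contra hnT
        have h1 : q ^ n ≤ ∑ i ∈ S, q ^ i := Finset.single_le_sum (fun i _ => Nat.zero_le _) hnS
        have h2 : ∑ i ∈ T, q ^ i < q ^ n := sum_pow_lt hq (fun i hi => by
          have := hT i hi; have : i ≠ n := fun h => hnT (h ▸ hi); omega)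
        omega
      · intro hnT
        by_contra hnS
        have h1 : q ^ n ≤ ∑ i ∈ T, q ^ i := Finset.single_le_sum (fun i _ => Nat.zero_le _) hnT
        have h2 : ∑ i ∈ S, q ^ i < q ^ n := sum_pow_lt hq (fun i hi => by
          have := hS i hi; have : i ≠ n := fun h => hnS (h ▸ hi); omega)
        omega
    by_cases hnS : n ∈ S
    · have hnT : n ∈ T := hkey.1 hnS
      have e1 : ∑ i ∈ S.erase n, q ^ i + q ^ n = ∑ i ∈ S, q ^ i := Finset.sum_erase_add _ _ hnS
      have e2 : ∑ i ∈ T.erase n, q ^ i + q ^ n = ∑ i ∈ T, q ^ i := Finset.sum_erase_add _ _ hnT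
      have := ih (S.erase n) (T.erase n) hSe hTe (by omega)
      ext x
      constructor
      · intro hx
        by_cases hxn : x = n
        · exact hxn ▸ hnT
        · exact Finset.mem_of_mem_erase (this ▸ Finset.mem_erase.2 ⟨hxn, hx⟩)
      · intro hx
        by_cases hxn : x = n
        · exact hxn ▸ hnS
        · exact Finset.mem_of_mem_erase (this ▸ Finset.mem_erase.2 ⟨hxn, hx⟩ : x ∈ S.erase n)
    · have hnT : n ∉ T := fun h => hnS (hkey.2 h)
      exact ih S T (fun i hi => by have := hS i hi; have : i ≠ n := fun h => hnS (h ▸ hi); omega)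
        (fun i hi => by have := hT i hi; have : i ≠ n := fun h => hnT (h ▸ hi); omega) hsum



/-- If the kernel of the functional given by `v0` is contained in that of `v`, then
`v = c • v0` for some `c`. -/
lemma prop_of_ker_subset {F : Type*} [Field F] {r : ℕ} (v0 v : Fin r → F) (hv0 : v0 ≠ 0)
    (h : ∀ x : Fin r → F, ∑ k, v0 k * x k = 0 → ∑ k, v k * x k = 0) :
    ∃ c : F, v = c • v0 := by
  obtain ⟨k0, hk0⟩ : ∃ k0, v0 k0 ≠ 0 := by
    by_contra hc
    push_neg at hc
    exact hv0 (funext fun k => hc k)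
  refine ⟨v k0 / v0 k0, funext fun k => ?_⟩
  -- consider x = (v0 k0) • e_k - (v0 k) • e_{k0}
  classical
  set x : Fin r → F := fun j => (if j = k then v0 k0 else 0) - (if j = k0 then v0 k else 0) with hx
  have hdot : ∑ j, v0 j * x j = 0 := by
    simp only [hx, mul_sub, mul_ite, mul_zero]
    rw [Finset.sum_sub_distrib]
    simp [Finset.sum_ite_eq' Finset.univ, mul_comm]
  have := h x hdot
  simp only [hx, mul_sub, mul_ite, mul_zero] at this
  rw [Finset.sum_sub_distrib] at this
  simp only [Finset.sum_ite_eq' Finset.univ, Finset.mem_univ, if_true] at this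
  have h2 : v k * v0 k0 = v k0 * v0 k := sub_eq_zero.mp this
  show v k = v k0 / v0 k0 * v0 k
  field_simp
  linear_combination h2

lemma dot_add_smul {F : Type*} [Field F] {r : ℕ} (v x y : Fin r → F) (c : F) :
    ∑ k, v k * (x + c • y) k = (∑ k, v k * x k) + c * ∑ k, v k * y k := by
  rw [Finset.mul_sum, ← Finset.sum_add_distrib]
  refine Finset.sum_congr rfl fun k _ => ?_
  simp only [Pi.add_apply, Pi.smul_apply, smul_eq_mul]
  ring

/-- Existence of a point in the kernel of `v j0`'s functional avoiding the kernels of all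
other functionals, provided there are fewer than `|F|` of them. -/
lemma exists_good_point {F : Type*} [Field F] [Fintype F] [DecidableEq F] {r : ℕ}
    {β : Type*} [DecidableEq β] (J : Finset β) (v : β → (Fin r → F)) (j0 : β) (hj0 : j0 ∈ J)
    (hv0 : ∀ j ∈ J, v j ≠ 0)
    (hvp : ∀ j ∈ J, ∀ j' ∈ J, j ≠ j' → ∀ c : F, v j ≠ c • v j')
    (hcard : J.card - 1 < Fintype.card F) :
    ∃ x : Fin r → F, (∑ k, v j0 k * x k) = 0 ∧ ∀ j ∈ J, j ≠ j0 → (∑ k, v j k * x k) ≠ 0 := by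
  classical
  set T : Finset (Fin r → F) := Finset.univ.filter (fun x => ∑ k, v j0 k * x k = 0) with hT
  have h0T : (0 : Fin r → F) ∈ T := by simp [hT]
  set A : β → Finset (Fin r → F) := fun j => T.filter (fun x => ∑ k, v j k * x k = 0) with hA
  have hsmall : ∀ j ∈ J.erase j0, (A j).card * Fintype.card F ≤ T.card := by
    intro j hj
    have hjJ : j ∈ J := Finset.mem_of_mem_erase hj
    have hjne : j ≠ j0 := Finset.ne_of_mem_erase hj
    obtain ⟨z, hzT, hz⟩ : ∃ z ∈ T, ∑ k, v j k * z k ≠ 0 := by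
      by_contra hc
      push_neg at hc
      obtain ⟨c, hcz⟩ := prop_of_ker_subset (v j0) (v j) (hv0 j0 hj0)
        (fun x hx => hc x (by simp [hT, hx]))
      exact hvp j hjJ j0 hj0 hjne c hcz
    have hzT0 : ∑ k, v j0 k * z k = 0 := by simpa [hT] using hzT
    have hmaps : ∀ p ∈ (A j) ×ˢ (Finset.univ : Finset F), p.1 + p.2 • z ∈ T := by
      rintro ⟨x, c⟩ hp
      simp only [Finset.mem_product, hA, Finset.mem_filter] at hp
      have hx0 : ∑ k, v j0 k * x k = 0 := by
        have := hp.1.1; simpa [hT] using this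
      simp only [hT, Finset.mem_filter, Finset.mem_univ, true_and]
      rw [dot_add_smul, hx0, hzT0]
      ring
    have hinj : Set.InjOn (fun p : (Fin r → F) × F => p.1 + p.2 • z)
        ((A j) ×ˢ (Finset.univ : Finset F) : Finset _) := by
      rintro ⟨x, c⟩ hp ⟨x', c'⟩ hp' heq
      simp only [Finset.mem_coe, Finset.mem_product, hA] at hp hp'
      have hx : ∑ k, v j k * x k = 0 := (Finset.mem_filter.1 hp.1).2
      have hx' : ∑ k, v j k * x' k = 0 := (Finset.mem_filter.1 hp'.1).2
      have hd : ∑ k, v j k * (x + c • z) k = ∑ k, v j k * (x' + c' • z) k := by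
        simp only at heq; rw [heq]
      rw [dot_add_smul, dot_add_smul, hx, hx', zero_add, zero_add] at hd
      have hcc : c = c' := mul_right_cancel₀ hz hd
      subst hcc
      have : x = x' := by
        have := heq
        simp only at this
        exact add_right_cancel this
      simp [this]
    have := Finset.card_le_card_of_injOn _ hmaps hinj
    calc (A j).card * Fintype.card F = ((A j) ×ˢ (Finset.univ : Finset F)).card := by
          rw [Finset.card_product, Finset.card_univ]
      _ ≤ T.card := this
  set bad : Finset (Fin r → F) :=
    T.filter (fun x => ∃ j ∈ J.erase j0, ∑ k, v j k * x k = 0) with hbad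
  have hbadsub : bad ⊆ (J.erase j0).biUnion A := by
    intro x hx
    simp only [hbad, Finset.mem_filter] at hx
    obtain ⟨hxT, j, hj, hjx⟩ := hx
    exact Finset.mem_biUnion.2 ⟨j, hj, by simp [hA, Finset.mem_filter, hxT, hjx]⟩
  have hTpos : 0 < T.card := Finset.card_pos.2 ⟨0, h0T⟩
  have hbadcard : bad.card < T.card := by
    have h1 : bad.card ≤ ∑ j ∈ J.erase j0, (A j).card :=
      le_trans (Finset.card_le_card hbadsub) (Finset.card_biUnion_le)
    have h2 : bad.card * Fintype.card F ≤ (J.erase j0).card * T.card := by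
      calc bad.card * Fintype.card F ≤ (∑ j ∈ J.erase j0, (A j).card) * Fintype.card F :=
            Nat.mul_le_mul_right _ h1
        _ = ∑ j ∈ J.erase j0, (A j).card * Fintype.card F := by rw [Finset.sum_mul]
        _ ≤ ∑ j ∈ J.erase j0, T.card := Finset.sum_le_sum hsmall
        _ = (J.erase j0).card * T.card := by rw [Finset.sum_const, smul_eq_mul]
    have h3 : (J.erase j0).card = J.card - 1 := Finset.card_erase_of_mem hj0
    have h4 : (J.erase j0).card * T.card < Fintype.card F * T.card := by
      rw [h3]
      exact Nat.mul_lt_mul_of_lt_of_le hcard le_rfl hTpos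
    have h5 : bad.card * Fintype.card F < Fintype.card F * T.card := lt_of_le_of_lt h2 h4
    rw [mul_comm (Fintype.card F) T.card] at h5
    exact Nat.lt_of_mul_lt_mul_right h5
  obtain ⟨x, hxT, hxbad⟩ : ∃ x ∈ T, x ∉ bad := by
    by_contra hc
    push_neg at hc
    exact absurd (Finset.card_le_card hc) (not_le.2 hbadcard)
  refine ⟨x, by simpa [hT] using hxT, fun j hj hjne => ?_⟩
  intro hjx
  refine hxbad ?_
  simp only [hbad, Finset.mem_filter]
  exact ⟨hxT, j, Finset.mem_erase.2 ⟨hjne, hj⟩, hjx⟩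

lemma coeff_prod_linear {F : Type*} [Field F] {q t : ℕ} (hq : 2 ≤ q) (I S : Finset ℕ)
    (hI : ∀ i ∈ I, i < t) (hS : S ⊆ I) (u b : ℕ → F) :
    (∏ i ∈ I, (Polynomial.C (u i) + Polynomial.C (b i) * Polynomial.X ^ (q ^ i))).coeff
      (∑ i ∈ S, q ^ i) = (∏ i ∈ I \ S, u i) * ∏ i ∈ S, b i := by
  classical
  rw [Finset.prod_add, Polynomial.finset_sum_coeff]
  have hterm : ∀ T ∈ I.powerset,
      ((∏ i ∈ T, Polynomial.C (u i)) *
        ∏ i ∈ I \ T, (Polynomial.C (b i) * Polynomial.X ^ (q ^ i))).coeff (∑ i ∈ S, q ^ i)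
      = if ∑ i ∈ I \ T, q ^ i = ∑ i ∈ S, q ^ i
        then (∏ i ∈ T, u i) * ∏ i ∈ I \ T, b i else 0 := by
    intro T _
    rw [Finset.prod_mul_distrib, ← map_prod Polynomial.C u T, ← map_prod Polynomial.C b (I \ T),
      Finset.prod_pow_eq_pow_sum, ← mul_assoc, ← Polynomial.C_mul, Polynomial.coeff_C_mul,
      Polynomial.coeff_X_pow]
    by_cases h : ∑ i ∈ S, q ^ i = ∑ i ∈ I \ T, q ^ i
    · rw [if_pos h, if_pos h.symm, mul_one]
    · rw [if_neg h, if_neg (fun hh => h hh.symm), mul_zero]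
  rw [Finset.sum_congr rfl hterm]
  rw [Finset.sum_eq_single_of_mem (I \ S)
    (Finset.mem_powerset.2 (Finset.sdiff_subset))]
  · rw [Finset.sdiff_sdiff_eq_self hS, if_pos rfl]
  · intro T hT hTne
    rw [if_neg]
    intro hsum
    have hIT : I \ T = S := sum_pow_inj hq t _ _
      (fun i hi => hI i (Finset.mem_sdiff.1 hi).1) (fun i hi => hI i (hS hi)) hsum
    have : T = I \ S := by
      rw [← hIT, Finset.sdiff_sdiff_eq_self (Finset.mem_powerset.1 hT)]
    exact hTne this

lemma exists_dot_ne {F : Type*} [Field F] [DecidableEq F] {r : ℕ} (v : Fin r → F) (hv : v ≠ 0) :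
    ∃ y : Fin r → F, ∑ k, v k * y k ≠ 0 := by
  obtain ⟨k0, hk0⟩ : ∃ k0, v k0 ≠ 0 := by
    by_contra hcon; push_neg at hcon; exact hv (funext fun k => hcon k)
  classical
  refine ⟨fun j => if j = k0 then 1 else 0, ?_⟩
  have : ∑ k, v k * (if k = k0 then (1:F) else 0) = v k0 := by
    rw [Finset.sum_eq_single k0]
    · simp
    · intro b _ hb; simp [hb]
    · intro h; exact absurd (Finset.mem_univ k0) h
  rw [this]; exact hk0

lemma main_aux {q t : ℕ} (hq : 2 ≤ q) {F : Type*} [Field F] [Fintype F] [DecidableEq F]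
    (hF : Fintype.card F = q ^ t)
    (hfrob : ∀ (x y : F) (i : ℕ), (x + y) ^ q ^ i = x ^ q ^ i + y ^ q ^ i)
    {r : ℕ} {β : Type*} [DecidableEq β] (I : Finset ℕ) :
    (∀ i ∈ I, i < t) →
    ∀ (J : Finset β) (v : β → (Fin r → F)) (c : β → F),
    J.Nonempty → (∀ j ∈ J, c j ≠ 0) → (∀ j ∈ J, v j ≠ 0) →
    (∀ j ∈ J, ∀ j' ∈ J, j ≠ j' → ∀ cc : F, v j ≠ cc • v j') →
    (∀ y : Fin r → F, ∑ j ∈ J, c j * ∏ i ∈ I, (∑ k, v j k * y k) ^ q ^ i = 0) →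
    I.card + 2 ≤ J.card := by
  induction I using Finset.induction_on with
  | empty =>
    intro _ J v c hJne hc hv hvp heq
    have h := heq 0
    simp only [Finset.prod_empty, mul_one] at h
    by_contra hlt
    push_neg at hlt
    have h1 : J.card = 1 := by
      have := hJne.card_pos
      simp only [Finset.card_empty] at hlt
      omega
    obtain ⟨a, ha⟩ := Finset.card_eq_one.1 h1
    rw [ha, Finset.sum_singleton] at h
    exact hc a (ha ▸ Finset.mem_singleton_self a) h
  | @insert i0 I' hi0 IH =>
    intro hIt J v c hJne hc hv hvp heq
    -- J has at least two elements
    have hJ2 : 2 ≤ J.card := by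
      by_contra hlt
      push_neg at hlt
      have h1 : J.card = 1 := by have := hJne.card_pos; omega
      obtain ⟨a, ha⟩ := Finset.card_eq_one.1 h1
      have haJ : a ∈ J := ha ▸ Finset.mem_singleton_self a
      obtain ⟨y, hy⟩ := exists_dot_ne (v a) (hv a haJ)
      have h := heq y
      rw [ha, Finset.sum_singleton] at h
      have hprod : ∏ i ∈ insert i0 I', (∑ k, v a k * y k) ^ q ^ i ≠ 0 :=
        Finset.prod_ne_zero_iff.2 (fun i _ => pow_ne_zero _ hy)
      exact hprod ((mul_eq_zero.1 h).resolve_left (hc a haJ))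
    by_cases hbig : Fintype.card F ≤ J.card - 1
    · -- trivially enough points
      have hIcard : (insert i0 I').card ≤ t := by
        have hsub : insert i0 I' ⊆ Finset.range t :=
          fun i hi => Finset.mem_range.2 (hIt i hi)
        have := Finset.card_le_card hsub
        simpa using this
      have ht2 : t < q ^ t := Nat.lt_pow_self hq
      rw [hF] at hbig
      omega
    · push_neg at hbig
      obtain ⟨j0, hj0⟩ := hJne
      obtain ⟨x0, hx0, hx0'⟩ := exists_good_point J v j0 hj0 hv hvp hbig
      have hqi0 : (0:F) ^ q ^ i0 = 0 := zero_pow (pow_pos (show 0 < q by omega) i0).ne'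
      have key : ∀ y : Fin r → F, ∑ j ∈ J.erase j0,
          (c j * (∑ k, v j k * x0 k) ^ q ^ i0) * ∏ i ∈ I', (∑ k, v j k * y k) ^ q ^ i = 0 := by
        intro y
        set p : Polynomial F := ∑ j ∈ J, Polynomial.C (c j) *
          ∏ i ∈ insert i0 I', (Polynomial.C ((∑ k, v j k * x0 k) ^ q ^ i) +
            Polynomial.C ((∑ k, v j k * y k) ^ q ^ i) * Polynomial.X ^ q ^ i) with hpdef
        have heval : ∀ z : F, p.eval z = 0 := by
          intro z
          have hfac : ∀ (j : β) (i : ℕ), (∑ k, v j k * (x0 + z • y) k) ^ q ^ i =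
              (∑ k, v j k * x0 k) ^ q ^ i + (∑ k, v j k * y k) ^ q ^ i * z ^ q ^ i := by
            intro j i
            rw [dot_add_smul, hfrob, mul_pow]
            ring
          have hev : p.eval z = ∑ j ∈ J, c j * ∏ i ∈ insert i0 I',
              ((∑ k, v j k * x0 k) ^ q ^ i + (∑ k, v j k * y k) ^ q ^ i * z ^ q ^ i) := by
            rw [hpdef]
            simp [Polynomial.eval_finset_sum, Polynomial.eval_prod]
          rw [hev]
          have := heq (x0 + z • y)
          calc ∑ j ∈ J, c j * ∏ i ∈ insert i0 I',
                ((∑ k, v j k * x0 k) ^ q ^ i + (∑ k, v j k * y k) ^ q ^ i * z ^ q ^ i)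
              = ∑ j ∈ J, c j * ∏ i ∈ insert i0 I', (∑ k, v j k * (x0 + z • y) k) ^ q ^ i := by
                refine Finset.sum_congr rfl fun j _ => ?_
                congr 1
                exact Finset.prod_congr rfl fun i _ => (hfac j i).symm
            _ = 0 := this
        have hdeg : p.natDegree < Fintype.card F := by
          have hdeg1 : p.natDegree ≤ ∑ i ∈ insert i0 I', q ^ i := by
            refine Polynomial.natDegree_sum_le_of_forall_le _ _ fun j _ => ?_
            refine le_trans (Polynomial.natDegree_C_mul_le _ _) ?_
            refine le_trans (Polynomial.natDegree_prod_le _ _) ?_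
            refine Finset.sum_le_sum fun i _ => ?_
            refine le_trans (Polynomial.natDegree_add_le _ _) ?_
            simp only [Polynomial.natDegree_C, max_le_iff]
            constructor
            · exact Nat.zero_le _
            · refine le_trans (Polynomial.natDegree_mul_le) ?_
              rw [Polynomial.natDegree_C, Polynomial.natDegree_X_pow, zero_add]
          rw [hF]
          exact lt_of_le_of_lt hdeg1 (sum_pow_lt hq hIt)
        have hp0 : p = 0 := Polynomial.eq_zero_of_natDegree_lt_card_of_eval_eq_zero p
          Function.injective_id (fun z => heval z) (by simpa using hdeg)
        have hco := congrArg (fun pp : Polynomial F => pp.coeff (∑ i ∈ I', q ^ i)) hp0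
        simp only [Polynomial.coeff_zero] at hco
        rw [hpdef, Polynomial.finset_sum_coeff] at hco
        have hsdiff : (insert i0 I') \ I' = {i0} := by
          ext i
          simp only [Finset.mem_sdiff, Finset.mem_insert, Finset.mem_singleton]
          constructor
          · rintro ⟨h1 | h1, h2⟩
            · exact h1
            · exact absurd h1 h2
          · rintro rfl
            exact ⟨Or.inl rfl, hi0⟩
        have hterm : ∀ j ∈ J, (Polynomial.C (c j) *
            ∏ i ∈ insert i0 I', (Polynomial.C ((∑ k, v j k * x0 k) ^ q ^ i) +
              Polynomial.C ((∑ k, v j k * y k) ^ q ^ i) * Polynomial.X ^ q ^ i)).coeff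
              (∑ i ∈ I', q ^ i)
            = c j * ((∑ k, v j k * x0 k) ^ q ^ i0 * ∏ i ∈ I', (∑ k, v j k * y k) ^ q ^ i) := by
          intro j _
          rw [Polynomial.coeff_C_mul,
            coeff_prod_linear hq (insert i0 I') I' hIt (Finset.subset_insert i0 I')
              (fun i => (∑ k, v j k * x0 k) ^ q ^ i) (fun i => (∑ k, v j k * y k) ^ q ^ i),
            hsdiff, Finset.prod_singleton]
        rw [Finset.sum_congr rfl hterm] at hco
        rw [← Finset.add_sum_erase _ _ hj0, hx0, hqi0, zero_mul, mul_zero, zero_add] at hco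
        rw [← hco]
        refine Finset.sum_congr rfl fun j _ => ?_
        ring
      -- apply the induction hypothesis
      have herase_ne : (J.erase j0).Nonempty := by
        rw [← Finset.card_pos, Finset.card_erase_of_mem hj0]
        omega
      have hIH := IH (fun i hi => hIt i (Finset.mem_insert_of_mem hi)) (J.erase j0) v
        (fun j => c j * (∑ k, v j k * x0 k) ^ q ^ i0) herase_ne
        (fun j hj => mul_ne_zero (hc j (Finset.mem_of_mem_erase hj))
          (pow_ne_zero _ (hx0' j (Finset.mem_of_mem_erase hj) (Finset.ne_of_mem_erase hj))))
        (fun j hj => hv j (Finset.mem_of_mem_erase hj))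
        (fun j hj j' hj' hne cc => hvp j (Finset.mem_of_mem_erase hj) j'
          (Finset.mem_of_mem_erase hj') hne cc)
        key
      rw [Finset.card_erase_of_mem hj0] at hIH
      rw [Finset.card_insert_of_notMem hi0]
      omega


/-- **Minimum distance lower bound for `C_{r,t}`.** Every nonzero codeword of
`C_{r,t}` has Hamming weight at least `t + 2`: if `∑ i, w i • α (P i) = 0` and
`w ≠ 0` then at least `t + 2` coordinates of `w` are nonzero. -/
theorem stmt_8
    (q t r n : ℕ) (ht : 1 ≤ t) (hr : 2 ≤ r)
    (F : Type*) [Field F] [Fintype F] [DecidableEq F] (hF : Fintype.card F = q ^ t)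
    (α : (Fin r → F) → (Fin t → Fin r) → F)
    (hα : ∀ v f, α v f = ∏ i : Fin t, v (f i) ^ q ^ (i : ℕ))
    (hn : n = (q ^ (r * t) - 1) / (q ^ t - 1))
    (P : Fin n → (Fin r → F))
    (hP0 : ∀ i, P i ≠ 0)
    (hPdist : ∀ i j, i ≠ j → ∀ c : F, P i ≠ c • P j)
    (hPall : ∀ v : Fin r → F, v ≠ 0 → ∃ i, ∃ c : F, v = c • P i)
    (w : Fin n → F) (hw : ∑ i, w i • α (P i) = 0) (hw0 : w ≠ 0) :
    t + 2 ≤ (Finset.univ.filter fun i => w i ≠ 0).card := by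
  classical
  -- q is at least 2
  have hq : 2 ≤ q := by
    by_contra h
    push_neg at h
    have h1 : q ^ t ≤ 1 ^ t := Nat.pow_le_pow_left (by omega) t
    have h2 : 1 < Fintype.card F := Fintype.one_lt_card
    rw [hF] at h2
    simp at h1
    omega
  -- Frobenius
  have hp : (ringChar F).Prime := CharP.char_is_prime F (ringChar F)
  obtain ⟨nn, _, hcard⟩ := FiniteField.card F (ringChar F)
  have hqt : q ^ t = (ringChar F) ^ (nn : ℕ) := hF ▸ hcard
  have hqdvd : q ∣ (ringChar F) ^ (nn : ℕ) := hqt ▸ dvd_pow_self q (by omega : t ≠ 0)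
  obtain ⟨m, hm, hqm⟩ := (Nat.dvd_prime_pow hp).1 hqdvd
  haveI := Fact.mk hp
  haveI : CharP F (ringChar F) := ringChar.charP F
  haveI : ExpChar F (ringChar F) := ExpChar.prime hp
  have hfrob : ∀ (x y : F) (i : ℕ), (x + y) ^ q ^ i = x ^ q ^ i + y ^ q ^ i := by
    intro x y i
    rw [hqm, ← pow_mul]
    exact add_pow_expChar_pow x y (ringChar F) (m * i)
  have hsum : ∀ {γ : Type} [Fintype γ] (g : γ → F) (i : ℕ),
      (∑ k, g k) ^ q ^ i = ∑ k, (g k) ^ q ^ i := by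
    intro γ _ g i
    rw [hqm, ← pow_mul]
    exact sum_pow_char_pow (ringChar F) (m * i) Finset.univ g
  -- pointwise form of the codeword equation
  have heqfun : ∀ f : Fin t → Fin r, ∑ i, w i * α (P i) f = 0 := by
    intro f
    have := congrFun hw f
    simpa [Finset.sum_apply, Pi.smul_apply, smul_eq_mul] using this
  set J : Finset (Fin n) := Finset.univ.filter (fun i => w i ≠ 0) with hJ
  have hJne : J.Nonempty := by
    obtain ⟨j, hj⟩ := Function.ne_iff.1 hw0
    have hj' : w j ≠ 0 := by simpa using hj
    exact ⟨j, by simp [hJ, hj']⟩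
  -- the norm-form equation
  have hmain : ∀ y : Fin r → F,
      ∑ j ∈ J, w j * ∏ i ∈ Finset.range t, (∑ k, P j k * y k) ^ q ^ i = 0 := by
    intro y
    have step0 : ∑ j ∈ J, w j * ∏ i ∈ Finset.range t, (∑ k, P j k * y k) ^ q ^ i
        = ∑ j : Fin n, w j * ∏ i ∈ Finset.range t, (∑ k, P j k * y k) ^ q ^ i := by
      rw [hJ]
      refine Finset.sum_filter_of_ne fun x _ hx => ?_
      intro hwx
      exact hx (by rw [hwx, zero_mul])
    have hper : ∀ j : Fin n, ∏ i ∈ Finset.range t, (∑ k, P j k * y k) ^ q ^ i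
        = ∑ f : Fin t → Fin r, α (P j) f * ∏ k : Fin t, y (f k) ^ q ^ (k : ℕ) := by
      intro j
      rw [← Fin.prod_univ_eq_prod_range (fun i => (∑ k, P j k * y k) ^ q ^ i) t]
      have h1 : ∀ i : Fin t, (∑ k, P j k * y k) ^ q ^ (i : ℕ)
          = ∑ k, (P j k * y k) ^ q ^ (i : ℕ) := fun i => hsum _ _
      rw [Finset.prod_congr rfl (fun i _ => h1 i)]
      rw [Finset.prod_univ_sum]
      rw [Fintype.piFinset_univ]
      refine Finset.sum_congr rfl fun f _ => ?_
      rw [hα, ← Finset.prod_mul_distrib]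
      exact Finset.prod_congr rfl fun k _ => (mul_pow _ _ _)
    rw [step0, Finset.sum_congr rfl (fun j _ => by rw [hper j])]
    calc ∑ j : Fin n, w j * ∑ f : Fin t → Fin r, α (P j) f * ∏ k : Fin t, y (f k) ^ q ^ (k : ℕ)
        = ∑ j : Fin n, ∑ f : Fin t → Fin r,
            w j * (α (P j) f * ∏ k : Fin t, y (f k) ^ q ^ (k : ℕ)) := by
          exact Finset.sum_congr rfl fun j _ => Finset.mul_sum _ _ _
      _ = ∑ f : Fin t → Fin r, ∑ j : Fin n,
            w j * (α (P j) f * ∏ k : Fin t, y (f k) ^ q ^ (k : ℕ)) := Finset.sum_comm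
      _ = ∑ f : Fin t → Fin r, (∑ j : Fin n, w j * α (P j) f) *
            ∏ k : Fin t, y (f k) ^ q ^ (k : ℕ) := by
          refine Finset.sum_congr rfl fun f _ => ?_
          rw [Finset.sum_mul]
          exact Finset.sum_congr rfl fun j _ => (mul_assoc _ _ _).symm
      _ = 0 := by
          refine Finset.sum_eq_zero fun f _ => ?_
          rw [heqfun f, zero_mul]
  have := main_aux hq hF hfrob (Finset.range t) (fun i hi => Finset.mem_range.1 hi)
    J P w hJne (fun j hj => (Finset.mem_filter.1 hj).2) (fun j _ => hP0 j)
    (fun j _ j' _ hne cc => hPdist j j' hne cc) hmain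
  rw [Finset.card_range] at this
  exact this
end

section
/- Assume t < q and let a, b : Fin r → F be linearly independent over F. The F-linear span of the α-image of the subline through a and b, i.e., of the set α({λ • a + μ • b : λ, μ ∈ K}), has F-dimension exactly t + 1. (The image of a subline PG(1, q) under α is a normal rational curve contained in a t-dimensional projective subspace.) -/
open Finset

section Aux

variable {t r : ℕ} {F : Type*} [Field F]

/-- The vector attached to a subset `S` of `Fin t`: product of `b`-coordinates over `S`
and `a`-coordinates off `S`, with Frobenius twists. -/
private def wv (q : ℕ) (a b : Fin r → F) (S : Finset (Fin t)) : (Fin t → Fin r) → F :=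
  fun f => ∏ i : Fin t, (if i ∈ S then b (f i) else a (f i)) ^ q ^ (i : ℕ)

/-- The `k`-th "coefficient vector" of the normal rational curve. -/
private def cv (q : ℕ) (a b : Fin r → F) (k : ℕ) : (Fin t → Fin r) → F :=
  ∑ S ∈ Finset.powersetCard k (Finset.univ : Finset (Fin t)), wv q a b S

private lemma group_powerset {M : Type*} [AddCommMonoid M] (g : Finset (Fin t) → M) :
    ∑ S ∈ (Finset.univ : Finset (Fin t)).powerset, g S
      = ∑ k ∈ Finset.range (t + 1), ∑ S ∈ Finset.powersetCard k Finset.univ, g S := by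
  rw [Finset.sum_powerset]
  simp

private lemma wv_apply (q : ℕ) (a b : Fin r → F) (S : Finset (Fin t)) (f : Fin t → Fin r) :
    wv q a b S f
      = (∏ i ∈ S, b (f i) ^ q ^ (i : ℕ)) * ∏ i ∈ Finset.univ \ S, a (f i) ^ q ^ (i : ℕ) := by
  classical
  rw [wv, ← Finset.prod_filter_mul_prod_filter_not Finset.univ (· ∈ S)]
  congr 1
  · rw [Finset.filter_mem_eq_inter, Finset.univ_inter]
    exact Finset.prod_congr rfl fun i hi => by rw [if_pos hi]
  · rw [Finset.filter_not, Finset.filter_mem_eq_inter, Finset.univ_inter]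
    exact Finset.prod_congr rfl fun i hi => by
      rw [if_neg (Finset.mem_sdiff.mp hi).2]

end Aux

/-- **The `α`-image of a subline spans a `t`-dimensional projective subspace.**
Assume `t < q` and let `a, b` be linearly independent over `F`. The `F`-linear span of
`α '' {λ • a + μ • b : λ, μ ∈ K}` has dimension exactly `t + 1`; i.e. the image of a
subline `PG(1,q)` under `α` is a normal rational curve spanning a `PG(t, q)`. -/
theorem stmt_11
    (q t r : ℕ) (ht : 1 ≤ t) (hr : 2 ≤ r) (hq : t < q)
    (F : Type*) [Field F] [Fintype F] (hF : Fintype.card F = q ^ t)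
    (K : Subfield F) (hK : Nat.card K = q)
    (α : (Fin r → F) → (Fin t → Fin r) → F)
    (hα : ∀ v f, α v f = ∏ i : Fin t, v (f i) ^ q ^ (i : ℕ))
    (a b : Fin r → F) (hab : LinearIndependent F ![a, b]) :
    Module.finrank F
      ↥(Submodule.span F
          (α '' {x | ∃ l m : K, x = (l : F) • a + (m : F) • b}))
      = t + 1 := by
  classical
  haveI : Fintype K := Fintype.ofFinite K
  have hKcard : Fintype.card K = q := by rw [← Nat.card_eq_fintype_card, hK]
  -- characteristic facts
  obtain ⟨p, hcharK⟩ := CharP.exists K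
  haveI := hcharK
  have hp : p.Prime := CharP.char_is_prime K p
  haveI : CharP F p := charP_of_injective_ringHom K.subtype.injective p
  haveI : ExpChar F p := ExpChar.prime hp
  obtain ⟨e, -, hqe⟩ := FiniteField.card K p
  have hqe' : q = p ^ (e : ℕ) := by rw [← hKcard, hqe]
  have hqpow : ∀ i : ℕ, q ^ i = p ^ ((e : ℕ) * i) := by
    intro i; rw [hqe', ← pow_mul]
  -- Frobenius additivity
  have hadd : ∀ (x y : F) (i : ℕ), (x + y) ^ q ^ i = x ^ q ^ i + y ^ q ^ i := by
    intro x y i; rw [hqpow i]; exact add_pow_expChar_pow x y p _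
  -- Frobenius injectivity
  have hinj : ∀ i : ℕ, Function.Injective fun x : F => x ^ q ^ i := by
    intro i
    have hdef : ∀ x : F, x ^ q ^ i = iterateFrobenius F p ((e : ℕ) * i) x := by
      intro x; rw [iterateFrobenius_def, hqpow i]
    intro x y hxy
    apply (iterateFrobenius F p ((e : ℕ) * i)).injective
    rw [← hdef, ← hdef]; exact hxy
  -- elements of K are fixed by q-power Frobenius
  have hcoe : ∀ (x : K) (i : ℕ), (x : F) ^ q ^ i = (x : F) := by
    intro x i
    have : x ^ q ^ i = x := by rw [← hKcard]; exact FiniteField.pow_card_pow i x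
    calc (x : F) ^ q ^ i = ((x ^ q ^ i : K) : F) := by push_cast; ring
      _ = (x : F) := by rw [this]
  -- the key expansion
  have key : ∀ l m : K, α ((l : F) • a + (m : F) • b)
      = ∑ k : Fin (t + 1),
          ((l : F) ^ (t - (k : ℕ)) * (m : F) ^ (k : ℕ)) • cv q a b (k : ℕ) := by
    intro l m
    funext f
    rw [hα]
    have step1 : ∀ i : Fin t,
        (((l : F) • a + (m : F) • b) (f i)) ^ q ^ (i : ℕ)
          = (m : F) * b (f i) ^ q ^ (i : ℕ) + (l : F) * a (f i) ^ q ^ (i : ℕ) := by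
      intro i
      simp only [Pi.add_apply, Pi.smul_apply, smul_eq_mul]
      rw [hadd, mul_pow, mul_pow, hcoe, hcoe, add_comm]
    calc ∏ i : Fin t, (((l : F) • a + (m : F) • b) (f i)) ^ q ^ (i : ℕ)
        = ∏ i : Fin t, ((m : F) * b (f i) ^ q ^ (i : ℕ)
            + (l : F) * a (f i) ^ q ^ (i : ℕ)) :=
          Finset.prod_congr rfl fun i _ => step1 i
      _ = ∑ S ∈ (Finset.univ : Finset (Fin t)).powerset,
            (∏ i ∈ S, (m : F) * b (f i) ^ q ^ (i : ℕ))
              * ∏ i ∈ Finset.univ \ S, (l : F) * a (f i) ^ q ^ (i : ℕ) :=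
          Finset.prod_add _ _ _
      _ = ∑ S ∈ (Finset.univ : Finset (Fin t)).powerset,
            ((l : F) ^ (t - S.card) * (m : F) ^ S.card) * wv q a b S f := by
          refine Finset.sum_congr rfl fun S _ => ?_
          rw [Finset.prod_mul_distrib, Finset.prod_mul_distrib,
            Finset.prod_const, Finset.prod_const, wv_apply,
            Finset.card_sdiff_of_subset (Finset.subset_univ S), Finset.card_univ,
            Fintype.card_fin]
          ring
      _ = ∑ k ∈ Finset.range (t + 1), ∑ S ∈ Finset.powersetCard k Finset.univ,
            ((l : F) ^ (t - S.card) * (m : F) ^ S.card) * wv q a b S f :=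
          group_powerset _
      _ = ∑ k ∈ Finset.range (t + 1),
            ((l : F) ^ (t - k) * (m : F) ^ k) * cv q a b k f := by
          refine Finset.sum_congr rfl fun k _ => ?_
          rw [cv, Finset.sum_apply, Finset.mul_sum]
          exact Finset.sum_congr rfl fun S hS => by
            rw [(Finset.mem_powersetCard.mp hS).2]
      _ = ∑ k : Fin (t + 1),
            ((l : F) ^ (t - (k : ℕ)) * (m : F) ^ (k : ℕ)) * cv q a b (k : ℕ) f := by
          rw [← Fin.sum_univ_eq_sum_range]
      _ = (∑ k : Fin (t + 1),
            ((l : F) ^ (t - (k : ℕ)) * (m : F) ^ (k : ℕ)) • cv q a b (k : ℕ)) f := by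
          simp [Finset.sum_apply]
  -- find a pair of coordinates where a, b have nonzero determinant
  have hdet : ∃ j0 j1 : Fin r, a j0 * b j1 ≠ a j1 * b j0 := by
    by_contra hno
    push_neg at hno
    have ha : a ≠ 0 := by
      have := hab.ne_zero 0
      simpa using this
    obtain ⟨j0, hj0⟩ : ∃ j0, a j0 ≠ 0 := by
      by_contra hc; push_neg at hc; exact ha (funext hc)
    set s := b j0 * (a j0)⁻¹ with hs
    have hbeq : b = s • a := by
      funext j
      have := hno j j0
      rw [hs]
      rw [Pi.smul_apply, smul_eq_mul, eq_comm, mul_comm (b j0), mul_assoc,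
        inv_mul_eq_iff_eq_mul₀ hj0]
      linear_combination this
    rw [linearIndependent_fin2] at hab
    rcases hab with ⟨hb0, hnb⟩
    simp only [Matrix.cons_val_one, Matrix.head_cons, Matrix.cons_val_zero] at hb0 hnb
    rcases eq_or_ne s 0 with h0 | h0
    · rw [h0, zero_smul] at hbeq; exact hb0 hbeq
    · exact hnb s⁻¹ (by rw [hbeq, smul_smul, inv_mul_cancel₀ h0, one_smul])
  obtain ⟨j0, j1, hdet⟩ := hdet
  -- basis of F × F adapted to i-th slot
  set ee : Fin t → Bool → F × F :=
    fun i s => (a (if s then j1 else j0) ^ q ^ (i : ℕ), b (if s then j1 else j0) ^ q ^ (i : ℕ))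
    with hee
  have hdet' : ∀ i : Fin t,
      a j0 ^ q ^ (i : ℕ) * b j1 ^ q ^ (i : ℕ) ≠ a j1 ^ q ^ (i : ℕ) * b j0 ^ q ^ (i : ℕ) := by
    intro i h
    exact hdet (hinj (i : ℕ) (by simpa [mul_pow] using h))
  have hli : ∀ i : Fin t, LinearIndependent F (ee i) := by
    intro i
    rw [Fintype.linearIndependent_iff]
    intro g hg
    rw [Fintype.sum_bool] at hg
    simp only [hee, if_pos, if_neg, Bool.ite_eq_true_distrib] at hg
    have h1 : g true * a j1 ^ q ^ (i : ℕ) + g false * a j0 ^ q ^ (i : ℕ) = 0 := by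
      have := congrArg Prod.fst hg; simpa using this
    have h2 : g true * b j1 ^ q ^ (i : ℕ) + g false * b j0 ^ q ^ (i : ℕ) = 0 := by
      have := congrArg Prod.snd hg; simpa using this
    set A0 := a j0 ^ q ^ (i : ℕ); set A1 := a j1 ^ q ^ (i : ℕ)
    set B0 := b j0 ^ q ^ (i : ℕ); set B1 := b j1 ^ q ^ (i : ℕ)
    have hD : A0 * B1 - A1 * B0 ≠ 0 := sub_ne_zero.mpr (hdet' i)
    have hgt : g true * (A0 * B1 - A1 * B0) = 0 := by linear_combination A0 * h2 - B0 * h1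
    have hgf : g false * (A0 * B1 - A1 * B0) = 0 := by linear_combination B1 * h1 - A1 * h2
    have hgt0 : g true = 0 := by
      rcases mul_eq_zero.mp hgt with h | h
      · exact h
      · exact absurd h hD
    have hgf0 : g false = 0 := by
      rcases mul_eq_zero.mp hgf with h | h
      · exact h
      · exact absurd h hD
    intro s; cases s
    · exact hgf0
    · exact hgt0
  have hcardee : ∀ i : Fin t, Fintype.card Bool = Module.finrank F (F × F) := by
    intro i
    simp [Module.finrank_prod]
  set eb : ∀ i : Fin t, Module.Basis Bool F (F × F) :=
    fun i => basisOfLinearIndependentOfCardEqFinrank (hli i) (hcardee i) with heb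
  have heb_apply : ∀ (i : Fin t) (s : Bool), eb i s = ee i s := by
    intro i s
    rw [heb, coe_basisOfLinearIndependentOfCardEqFinrank]
  -- linear independence of the coefficient vectors
  have hcli : LinearIndependent F fun k : Fin (t + 1) => (cv q a b (k : ℕ) : (Fin t → Fin r) → F) := by
    rw [Fintype.linearIndependent_iff]
    intro d hd
    set D : ℕ → F := fun n => if h : n < t + 1 then d ⟨n, h⟩ else 0 with hDdef
    have hPS : ∀ f : Fin t → Fin r,
        ∑ S ∈ (Finset.univ : Finset (Fin t)).powerset, D S.card * wv q a b S f = 0 := by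
      intro f
      rw [group_powerset]
      have e1 : ∀ k ∈ Finset.range (t + 1),
          ∑ S ∈ Finset.powersetCard k Finset.univ, D S.card * wv q a b S f
            = D k * cv q a b k f := by
        intro k _
        rw [cv, Finset.sum_apply, Finset.mul_sum]
        exact Finset.sum_congr rfl fun S hS => by rw [(Finset.mem_powersetCard.mp hS).2]
      rw [Finset.sum_congr rfl e1,
        ← Fin.sum_univ_eq_sum_range (fun k => D k * cv q a b k f)]
      have e2 : ∀ k : Fin (t + 1),
          D (k : ℕ) * cv q a b (k : ℕ) f = d k * cv q a b (k : ℕ) f := by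
        intro k; rw [hDdef]; simp [k.is_lt]
      rw [Finset.sum_congr rfl fun k _ => e2 k]
      calc ∑ k : Fin (t + 1), d k * cv q a b (k : ℕ) f
          = (∑ k : Fin (t + 1), d k • cv q a b (k : ℕ)) f := by simp [Finset.sum_apply]
        _ = 0 := by rw [hd]; rfl
    set QS : Finset (Fin t) → MultilinearMap F (fun _ : Fin t => F × F) F :=
      fun S => (MultilinearMap.mkPiAlgebra F (Fin t) F).compLinearMap
        fun i => if i ∈ S then LinearMap.snd F F F else LinearMap.fst F F F with hQS
    set Q : MultilinearMap F (fun _ : Fin t => F × F) F :=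
      ∑ S ∈ (Finset.univ : Finset (Fin t)).powerset, D S.card • QS S with hQ
    have hQapp : ∀ z : Fin t → F × F,
        Q z = ∑ S ∈ (Finset.univ : Finset (Fin t)).powerset,
          D S.card * ∏ i : Fin t, (if i ∈ S then (z i).2 else (z i).1) := by
      intro z
      rw [hQ, MultilinearMap.sum_apply]
      refine Finset.sum_congr rfl fun S _ => ?_
      rw [MultilinearMap.smul_apply, hQS]
      simp only [MultilinearMap.compLinearMap_apply, MultilinearMap.mkPiAlgebra_apply,
        smul_eq_mul]
      congr 1
      refine Finset.prod_congr rfl fun i _ => ?_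
      by_cases hiS : i ∈ S <;> simp [hiS]
    have hQ0 : Q = 0 := by
      apply Module.Basis.ext_multilinear eb
      intro v
      rw [hQapp, MultilinearMap.zero_apply]
      have e3 : ∀ S : Finset (Fin t),
          (∏ i : Fin t, (if i ∈ S then ((eb i) (v i)).2 else ((eb i) (v i)).1))
            = wv q a b S (fun i => if v i then j1 else j0) := by
        intro S
        rw [wv]
        refine Finset.prod_congr rfl fun i _ => ?_
        rw [heb_apply]
        by_cases hiS : i ∈ S <;> simp [hee, hiS]
      rw [Finset.sum_congr rfl fun S _ => by rw [e3 S]]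
      exact hPS _
    have hQz : ∀ T : Finset (Fin t), ∑ S ∈ T.powerset, D S.card = 0 := by
      intro T
      have h0 : Q (fun i => ((1 : F), if i ∈ T then 1 else 0)) = 0 := by rw [hQ0]; rfl
      rw [hQapp] at h0
      have hprod : ∀ S ∈ (Finset.univ : Finset (Fin t)).powerset,
          D S.card * (∏ i : Fin t,
              (if i ∈ S then (if i ∈ T then (1 : F) else 0) else 1))
            = if S ⊆ T then D S.card else 0 := by
        intro S _
        by_cases hST : S ⊆ T
        · rw [if_pos hST, Finset.prod_eq_one, mul_one]
          intro i _
          by_cases hiS : i ∈ S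
          · rw [if_pos hiS, if_pos (hST hiS)]
          · rw [if_neg hiS]
        · rw [if_neg hST]
          obtain ⟨i, hiS, hiT⟩ := Finset.not_subset.mp hST
          rw [Finset.prod_eq_zero (Finset.mem_univ i), mul_zero]
          rw [if_pos hiS, if_neg hiT]
      rw [Finset.sum_congr rfl hprod, Finset.sum_ite, Finset.sum_const_zero, add_zero] at h0
      rw [← h0]
      refine Finset.sum_congr ?_ fun _ _ => rfl
      ext S
      simp [Finset.mem_powerset]
    have hDn : ∀ n : ℕ, n ≤ t → D n = 0 := by
      intro n
      induction n using Nat.strong_induction_on with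
      | _ n IH =>
        intro hn
        obtain ⟨T, -, hT⟩ := Finset.exists_subset_card_eq
          (show n ≤ (Finset.univ : Finset (Fin t)).card by simpa using hn)
        have h0 := hQz T
        rw [Finset.sum_eq_single T
          (fun S hS hne => ?side1) (fun h => absurd (Finset.mem_powerset_self T) h)] at h0
        · rw [hT] at h0; exact h0
        case side1 =>
          have hlt : S.card < n := by
            rw [← hT]
            exact Finset.card_lt_card (lt_of_le_of_ne (Finset.mem_powerset.mp hS) hne)
          exact IH S.card hlt (le_trans hlt.le hn)
    intro k
    have hk := hDn k (Nat.lt_succ_iff.mp k.is_lt)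
    rw [hDdef] at hk
    simpa [k.is_lt] using hk
  -- a family of points on the subline with distinct parameters
  have htq : t + 1 ≤ q := hq
  set χ : Fin (t + 1) → K := fun j => (Fintype.equivFinOfCardEq hKcard).symm (Fin.castLE htq j)
    with hχdef
  have hχinj : Function.Injective fun j : Fin (t + 1) => ((χ j : F)) := by
    intro x y hxy
    have h1 : χ x = χ y := Subtype.val_injective hxy
    rw [hχdef] at h1
    have h2 := (Fintype.equivFinOfCardEq hKcard).symm.injective h1
    have h3 := congrArg Fin.val h2
    simpa [Fin.ext_iff] using h3
  set v : Fin (t + 1) → (Fin t → Fin r) → F :=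
    fun j => ∑ k : Fin (t + 1), (χ j : F) ^ (k : ℕ) • cv q a b (k : ℕ) with hv
  have hvα : ∀ j, α (((1 : K) : F) • a + ((χ j : K) : F) • b) = v j := by
    intro j
    rw [key 1 (χ j), hv]
    simp
  have hvmem : ∀ j, v j ∈ α '' {x | ∃ l m : K, x = (l : F) • a + (m : F) • b} := by
    intro j
    exact ⟨((1 : K) : F) • a + ((χ j : K) : F) • b, ⟨1, χ j, rfl⟩, hvα j⟩
  have hvli : LinearIndependent F v := by
    rw [Fintype.linearIndependent_iff]
    intro g hg
    have hg' : ∑ k : Fin (t + 1),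
        (∑ j : Fin (t + 1), g j * (χ j : F) ^ (k : ℕ)) • (cv q a b (k : ℕ) : (Fin t → Fin r) → F) = 0 := by
      calc ∑ k : Fin (t + 1),
            (∑ j : Fin (t + 1), g j * (χ j : F) ^ (k : ℕ)) • (cv q a b (k : ℕ) : (Fin t → Fin r) → F)
          = ∑ k : Fin (t + 1), ∑ j : Fin (t + 1),
              (g j * (χ j : F) ^ (k : ℕ)) • cv q a b (k : ℕ) := by
            exact Finset.sum_congr rfl fun k _ => by rw [Finset.sum_smul]
        _ = ∑ j : Fin (t + 1), ∑ k : Fin (t + 1),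
              (g j * (χ j : F) ^ (k : ℕ)) • cv q a b (k : ℕ) := Finset.sum_comm
        _ = ∑ j : Fin (t + 1), g j • v j := by
            refine Finset.sum_congr rfl fun j _ => ?_
            rw [hv, Finset.smul_sum]
            exact Finset.sum_congr rfl fun k _ => by rw [smul_smul]
        _ = 0 := hg
    have hcoeff : ∀ k : Fin (t + 1), ∑ j : Fin (t + 1), g j * (χ j : F) ^ (k : ℕ) = 0 :=
      fun k => Fintype.linearIndependent_iff.mp hcli _ hg' k
    have hzero := Matrix.eq_zero_of_forall_pow_sum_mul_pow_eq_zero hχinj fun i => hcoeff i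
    exact fun j => congrFun hzero j
  -- conclusion via the two span comparisons
  have hWup : Submodule.span F (α '' {x | ∃ l m : K, x = (l : F) • a + (m : F) • b})
      ≤ Submodule.span F (Set.range fun k : Fin (t + 1) => (cv q a b (k : ℕ) : (Fin t → Fin r) → F)) := by
    rw [Submodule.span_le]
    rintro x ⟨y, ⟨l, m, rfl⟩, rfl⟩
    rw [key]
    exact Submodule.sum_mem _ fun k _ =>
      Submodule.smul_mem _ _ (Submodule.subset_span ⟨k, rfl⟩)
  have hWlow : Submodule.span F (Set.range v)
      ≤ Submodule.span F (α '' {x | ∃ l m : K, x = (l : F) • a + (m : F) • b}) := by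
    rw [Submodule.span_le]
    rintro x ⟨j, rfl⟩
    exact Submodule.subset_span (hvmem j)
  have hup : Module.finrank F
      (Submodule.span F (α '' {x | ∃ l m : K, x = (l : F) • a + (m : F) • b})) ≤ t + 1 := by
    refine le_trans (Submodule.finrank_mono hWup) ?_
    have := finrank_range_le_card (R := F) (fun k : Fin (t + 1) => (cv q a b (k : ℕ) : (Fin t → Fin r) → F))
    simpa [Set.finrank] using this
  have hlow : t + 1 ≤ Module.finrank F
      (Submodule.span F (α '' {x | ∃ l m : K, x = (l : F) • a + (m : F) • b})) := by
    have hcard := finrank_span_eq_card hvli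
    calc t + 1 = Module.finrank F (Submodule.span F (Set.range v)) := by
          rw [hcard]; simp
      _ ≤ _ := Submodule.finrank_mono hWlow
  exact le_antisymm hup hlow
end

section
/- Assume t < q and write n = (q^{rt} − 1)/(q^t − 1). The code C_{r,t} is constacyclic: there exist a family P : ZMod n → (Fin r → F) of nonzero pairwise non-proportional vectors enumerating the points of PG(r−1, q^t) (every nonzero vector of Fin r → F is proportional to some P(i)) and a scalar β ∈ Fˣ such that for every word w : ZMod n → F with ∑_i w(i) • α(P(i)) = 0, the word w′ defined by w′(i) = w(i − 1) for i ≠ 0 and w′(0) = β · w(−1) also satisfies ∑_i w′(i) • α(P(i)) = 0. -/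
open Polynomial

noncomputable def ExtF (F : Type*) [Field F] [Fintype F] (r : ℕ) : Type _ :=
  SplittingField (X ^ (Fintype.card F ^ r) - X : F[X])

namespace ExtF
variable (F : Type*) [Field F] [Fintype F] (r : ℕ)

noncomputable instance : Field (ExtF F r) := inferInstanceAs (Field (SplittingField _))
noncomputable instance : Algebra F (ExtF F r) := inferInstanceAs (Algebra F (SplittingField _))
instance : FiniteDimensional F (ExtF F r) :=
  inferInstanceAs (FiniteDimensional F (SplittingField _))
instance : Finite (ExtF F r) := Module.finite_of_finite F

theorem card (hr : r ≠ 0) : Nat.card (ExtF F r) = Fintype.card F ^ r := by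
  classical
  set p := ringChar F with hpdef
  haveI : CharP F p := ringChar.charP F
  have hp : p.Prime := CharP.char_is_prime F p
  haveI : Fact p.Prime := ⟨hp⟩
  obtain ⟨m, -, hFc⟩ := FiniteField.card F p
  haveI : CharP (ExtF F r) p := (Algebra.charP_iff F (ExtF F r) p).mp ‹_›
  haveI : Fintype (ExtF F r) := Fintype.ofFinite _
  set Q := Fintype.card F with hQ
  have hQ1 : 1 < Q := Fintype.one_lt_card
  have hQr1 : 1 < Q ^ r := one_lt_pow₀ hQ1 hr
  set g : F[X] := X ^ (Q ^ r) - X with hg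
  have hpd : p ∣ Q ^ r := dvd_pow (by rw [hFc]; exact dvd_pow_self p m.pos.ne') hr
  have hsep : g.Separable := galois_poly_separable p (Q ^ r) hpd
  have hndeg : g.natDegree = Q ^ r := FiniteField.X_pow_card_sub_X_natDegree_eq _ hQr1
  have aux : (X ^ (Q ^ r) - X : (ExtF F r)[X]) ≠ 0 :=
    FiniteField.X_pow_card_sub_X_ne_zero _ hQr1
  have key : Fintype.card (g.rootSet (ExtF F r)) = g.natDegree :=
    card_rootSet_eq_natDegree hsep (SplittingField.splits g)
  suffices huniv : g.rootSet (ExtF F r) = Set.univ by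
    have h2 : Nat.card (ExtF F r) = Nat.card (g.rootSet (ExtF F r)) := by
      rw [huniv]; exact (Nat.card_congr (Equiv.Set.univ _)).symm
    rw [h2, Nat.card_eq_fintype_card, key, hndeg]
  rw [Set.eq_univ_iff_forall]
  suffices h : ∀ (x) (_ : x ∈ (⊤ : Subalgebra F (ExtF F r))), x ∈ g.rootSet (ExtF F r) by
    intro x; exact h x trivial
  rw [show (⊤ : Subalgebra F (ExtF F r)) = Algebra.adjoin F (g.rootSet (ExtF F r)) from
    (SplittingField.adjoin_rootSet g).symm]
  simp_rw [Algebra.mem_adjoin_iff]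
  intro x hx
  have haux : ∀ y : ExtF F r, y ∈ g.rootSet (ExtF F r) ↔ y ^ Q ^ r = y := by
    intro y
    rw [mem_rootSet_of_ne (by simpa [hg] using (FiniteField.X_pow_card_sub_X_ne_zero F hQr1 : g ≠ 0))]
    simp [hg, sub_eq_zero]
  refine Subring.closure_induction ?_ ?_ ?_ ?_ ?_ ?_ hx
  · rintro y (⟨c, rfl⟩ | hy)
    · rw [haux, ← map_pow, FiniteField.pow_card_pow]
    · exact hy
  · rw [haux, zero_pow (by positivity)]
  · rw [haux, one_pow]
  · intro a b _ _ ha hb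
    rw [haux] at ha hb ⊢
    have he : Q ^ r = p ^ (↑m * r) := by rw [hFc, ← pow_mul]
    rw [he] at ha hb ⊢
    rw [add_pow_char_pow, ha, hb]
  · intro a _ ha
    rw [haux] at ha ⊢
    have he : Q ^ r = p ^ (↑m * r) := by rw [hFc, ← pow_mul]
    rw [he] at ha ⊢
    rw [neg_pow, ha, neg_one_pow_char_pow]
    ring
  · intro a b _ _ ha hb
    rw [haux] at ha hb ⊢
    rw [mul_pow, ha, hb]

end ExtF

/-- **`C_{r,t}` is constacyclic.** Assume `t < q` and `n = (q^{rt} - 1)/(q^t - 1)`.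
There are an enumeration `P : ZMod n → (Fin r → F)` of the points of `PG(r-1, q^t)`
(ordered by a Singer cycle) and a scalar `β ∈ Fˣ` such that the code
`{w | ∑ i, w i • α (P i) = 0}` is closed under the constacyclic shift
`(w 0, …, w (n-1)) ↦ (β * w (n-1), w 0, …, w (n-2))`. -/
theorem stmt_15
    (q t r n : ℕ) (ht : 1 ≤ t) (hr : 2 ≤ r) (hq : t < q) [NeZero n]
    (F : Type*) [Field F] [Fintype F] (hF : Fintype.card F = q ^ t)
    (α : (Fin r → F) → (Fin t → Fin r) → F)
    (hα : ∀ v f, α v f = ∏ i : Fin t, v (f i) ^ q ^ (i : ℕ))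
    (hn : n = (q ^ (r * t) - 1) / (q ^ t - 1)) :
    ∃ (P : ZMod n → (Fin r → F)) (β : Fˣ),
      (∀ i, P i ≠ 0) ∧
      (∀ i j, i ≠ j → ∀ c : F, P i ≠ c • P j) ∧
      (∀ v : Fin r → F, v ≠ 0 → ∃ i, ∃ c : F, v = c • P i) ∧
      (∀ w : ZMod n → F, ∑ i, w i • α (P i) = 0 →
        ∑ i, (if i = 0 then (β : F) * w (-1) else w (i - 1)) • α (P i) = 0) := by
  classical
  -- basic numerology
  have hq2 : 2 ≤ q := by omega
  have hQ2 : 2 ≤ q ^ t := le_trans hq2 (Nat.le_self_pow (by omega) q)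
  have htrt : t < r * t := by nlinarith
  have hQlt : q ^ t < q ^ (r * t) := Nat.pow_lt_pow_right (by omega) htrt
  set N := q ^ (r * t) - 1 with hNdef
  have hdvd : (q ^ t - 1) ∣ N := by
    have := Nat.sub_dvd_pow_sub_pow (q ^ t) 1 r
    simpa [one_pow, ← pow_mul, mul_comm t r] using this
  have hNn : N = n * (q ^ t - 1) := by
    rw [hn]; exact (Nat.div_mul_cancel hdvd).symm
  have hnpos : 0 < n := Nat.pos_of_ne_zero (NeZero.ne n)
  have hn2 : 2 ≤ n := by
    rcases Nat.lt_or_ge n 2 with h | h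
    · interval_cases n
      omega
    · exact h
  -- characteristic
  set p := ringChar F with hpdef
  haveI : CharP F p := ringChar.charP F
  have hp : p.Prime := CharP.char_is_prime F p
  haveI : Fact p.Prime := ⟨hp⟩
  obtain ⟨m, -, hFc⟩ := FiniteField.card F p
  obtain ⟨s, -, hqs⟩ := (Nat.dvd_prime_pow hp).mp
    (show q ∣ p ^ (m : ℕ) by rw [← hFc, hF]; exact dvd_pow_self q (by omega))
  have hfrobsum : ∀ (e : ℕ) (sι : Finset (Fin r)) (f : Fin r → F),
      (∑ k ∈ sι, f k) ^ q ^ e = ∑ k ∈ sι, f k ^ q ^ e := by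
    intro e sι f
    induction sι using Finset.cons_induction with
    | empty => simp [zero_pow (pow_ne_zero e (by omega : q ≠ 0))]
    | cons a sι ha ih =>
      rw [Finset.sum_cons, Finset.sum_cons, ← ih, hqs, ← pow_mul, add_pow_char_pow]
  -- the extension field
  set E := ExtF F r with hEdef
  haveI : Fintype E := Fintype.ofFinite E
  have hcardE : Fintype.card E = q ^ (r * t) := by
    have h1 := ExtF.card F r (by omega)
    rw [Nat.card_eq_fintype_card] at h1
    rw [h1, hF, ← pow_mul, mul_comm t r]
  have hcardEU : Fintype.card Eˣ = N := by
    rw [Fintype.card_units, hcardE]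
  obtain ⟨g, hg⟩ := IsCyclic.exists_generator (α := Eˣ)
  have horder : orderOf g = N := by
    rw [orderOf_eq_card_of_forall_mem_zpowers hg, Nat.card_eq_fintype_card, hcardEU]
  have hgN : g ^ N = 1 := by rw [← horder]; exact pow_orderOf_eq_one g
  -- the basis
  have hfr : Module.finrank F E = r := by
    have h1 : Fintype.card E = Fintype.card F ^ Module.finrank F E := Module.card_eq_pow_finrank
    rw [hcardE, hF, ← pow_mul] at h1
    have h2 := Nat.pow_right_injective hq2 h1
    rw [mul_comm r t] at h2
    exact (Nat.eq_of_mul_eq_mul_left (by omega : 0 < t) h2).symm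
  set b : Module.Basis (Fin r) F E := (Module.finBasis F E).reindex (finCongr hfr) with hbdef
  set ef : E ≃ₗ[F] (Fin r → F) := b.equivFun with hefdef
  -- subfield characterisation
  have hsub : ∀ x : E, x ^ q ^ t = x → ∃ c : F, algebraMap F E c = x := by
    intro x hx
    set Pl : Polynomial E := Polynomial.X ^ q ^ t - Polynomial.X with hPl
    have hPl0 : Pl ≠ 0 := FiniteField.X_pow_card_sub_X_ne_zero E (by omega)
    have hdeg : Pl.natDegree = q ^ t := FiniteField.X_pow_card_sub_X_natDegree_eq E (by omega)
    set S : Finset E := Finset.univ.image (algebraMap F E) with hS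
    have hcardS : S.card = q ^ t := by
      rw [hS, Finset.card_image_of_injective _ (algebraMap F E).injective,
        Finset.card_univ, hF]
    have hroot : ∀ y : E, y ^ q ^ t = y → y ∈ Pl.roots.toFinset := by
      intro y hy
      rw [Multiset.mem_toFinset, Polynomial.mem_roots hPl0]
      simp [hPl, Polynomial.IsRoot, sub_eq_zero, hy]
    have hsubset : S ⊆ Pl.roots.toFinset := by
      intro y hy
      obtain ⟨c, -, rfl⟩ := Finset.mem_image.mp hy
      apply hroot
      rw [← map_pow, ← hF, FiniteField.pow_card]
    have hcard2 : Pl.roots.toFinset.card ≤ q ^ t :=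
      le_trans (Multiset.toFinset_card_le _) (le_trans (Polynomial.card_roots' Pl) (le_of_eq hdeg))
    have hEq : S = Pl.roots.toFinset :=
      Finset.eq_of_subset_of_card_le hsubset (by rw [hcardS]; exact hcard2)
    have hxmem := hroot x hx
    rw [← hEq] at hxmem
    obtain ⟨c, -, hc⟩ := Finset.mem_image.mp hxmem
    exact ⟨c, hc⟩
  -- the scalar
  obtain ⟨c0, hc0⟩ : ∃ c0 : F, algebraMap F E c0 = ((g ^ n : Eˣ) : E) := by
    apply hsub
    have h1 : (g ^ n) ^ (q ^ t - 1) = 1 := by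
      rw [← pow_mul, ← hNn, hgN]
    have h1' : ((g ^ n : Eˣ) : E) ^ (q ^ t - 1) = 1 := by
      rw [← Units.val_pow_eq_pow_val, h1, Units.val_one]
    calc ((g ^ n : Eˣ) : E) ^ q ^ t = ((g ^ n : Eˣ) : E) ^ (q ^ t - 1) * ((g ^ n : Eˣ) : E) := by
          rw [← pow_succ]; congr 1; omega
      _ = ((g ^ n : Eˣ) : E) := by rw [h1', one_mul]
  have hc0ne : c0 ≠ 0 := by
    intro h
    exact (g ^ n).ne_zero (by rw [← hc0, h, map_zero])
  -- the point enumeration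
  set gE : E := ((g : Eˣ) : E) with hgE
  set Pe : ZMod n → E := fun i => ((g ^ i.val : Eˣ) : E) with hPedef
  set P : ZMod n → (Fin r → F) := fun i => ef (Pe i) with hPdef
  have hPene : ∀ i, Pe i ≠ 0 := fun i => (g ^ (i : ZMod n).val).ne_zero
  -- multiplication matrix
  set M : Fin r → Fin r → F := fun j k => ef (gE * b k) j with hMdef
  have hmul : ∀ x : E, ef (gE * x) = fun j => ∑ k, M j k * ef x k := by
    intro x
    funext j
    conv_lhs => rw [show x = ef.symm (ef x) from (ef.symm_apply_apply x).symm,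
      hefdef, Module.Basis.equivFun_symm_apply]
    rw [Finset.mul_sum]
    simp_rw [mul_smul_comm]
    rw [map_sum, Finset.sum_apply]
    refine Finset.sum_congr rfl fun k _ => ?_
    rw [map_smul, Pi.smul_apply, smul_eq_mul, mul_comm]
  -- smul of algebraMap through ef
  have hefsmul : ∀ (c : F) (x : E), ef (algebraMap F E c * x) = c • ef x := by
    intro c x
    rw [← Algebra.smul_def, map_smul]
  -- the twisted linear action
  have hαM : ∀ v : Fin r → F, α (fun j => ∑ k, M j k * v k) =
      fun f => ∑ gf : Fin t → Fin r,
        (∏ i : Fin t, M (f i) (gf i) ^ q ^ (i : ℕ)) * α v gf := by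
    intro v
    funext f
    rw [hα]
    have h1 : ∀ i : Fin t, (∑ k, M (f i) k * v k) ^ q ^ (i : ℕ) =
        ∑ k, (M (f i) k * v k) ^ q ^ (i : ℕ) := fun i => hfrobsum _ _ _
    simp_rw [h1]
    rw [Finset.prod_univ_sum]
    rw [Fintype.piFinset_univ]
    refine Finset.sum_congr rfl fun gf _ => ?_
    rw [hα]
    simp_rw [mul_pow]
    rw [Finset.prod_mul_distrib]
  -- the induced map on the tensor space
  set B : ((Fin t → Fin r) → F) → ((Fin t → Fin r) → F) := fun x f =>
    ∑ gf : Fin t → Fin r, (∏ i : Fin t, M (f i) (gf i) ^ q ^ (i : ℕ)) * x gf with hBdef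
  have hB0 : B 0 = 0 := by
    funext f; simp [hBdef]
  have hBsum : ∀ (w : ZMod n → F) (y : ZMod n → (Fin t → Fin r) → F),
      B (∑ i, w i • y i) = ∑ i, w i • B (y i) := by
    intro w y
    funext f
    simp only [hBdef, Finset.sum_apply, Pi.smul_apply, smul_eq_mul, Finset.mul_sum]
    rw [Finset.sum_comm]
    refine Finset.sum_congr rfl fun i _ => Finset.sum_congr rfl fun gf _ => by ring
  have hstep : ∀ v : Fin r → F, B (α v) = α (fun j => ∑ k, M j k * v k) := by
    intro v
    rw [hαM v]
  have hαsmul : ∀ (c : F) (v : Fin r → F),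
      α (c • v) = (∏ i : Fin t, c ^ q ^ (i : ℕ)) • α v := by
    intro c v
    funext f
    rw [Pi.smul_apply, smul_eq_mul, hα, hα]
    simp_rw [Pi.smul_apply, smul_eq_mul, mul_pow]
    rw [Finset.prod_mul_distrib]
  -- ZMod facts
  have hneg1 : (-1 : ZMod n) = ((n - 1 : ℕ) : ZMod n) := by
    rw [Nat.cast_sub (by omega : 1 ≤ n), ZMod.natCast_self, Nat.cast_one]
    ring
  have hvneg1 : (-1 : ZMod n).val = n - 1 := by
    rw [hneg1, ZMod.val_cast_of_lt (by omega)]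
  have hsuccval : ∀ i : ZMod n, i ≠ -1 → (i + 1).val = i.val + 1 := by
    intro i hi
    have h1 : i.val < n := ZMod.val_lt i
    have h2 : i.val ≠ n - 1 := by
      intro h
      apply hi
      have h3 := ZMod.natCast_rightInverse (n := n) i
      rw [← h3, h, ← hneg1]
    have hv1 : (1 : ZMod n).val = 1 := by
      have h4 : ((1 : ℕ) : ZMod n) = 1 := by push_cast; ring
      rw [← h4, ZMod.val_cast_of_lt (by omega)]
    rw [ZMod.val_add_of_lt (by rw [hv1]; omega), hv1]
  have hPe0 : Pe 0 = 1 := by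
    simp [hPedef, ZMod.val_zero]
  have hPesucc : ∀ i : ZMod n, i ≠ -1 → Pe (i + 1) = gE * Pe i := by
    intro i hi
    simp only [hPedef]
    rw [hsuccval i hi, pow_succ', Units.val_mul]
  have hPewrap : gE * Pe (-1) = algebraMap F E c0 := by
    simp only [hPedef]
    rw [hvneg1, hc0, hgE, ← Units.val_mul]
    congr 1
    rw [← pow_succ']
    congr 1
    omega
  -- the B relations
  have hBP1 : ∀ i : ZMod n, i ≠ -1 → B (α (P i)) = α (P (i + 1)) := by
    intro i hi
    rw [hstep]
    have h2 : (fun j => ∑ k, M j k * P i k) = ef (Pe (i + 1)) := by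
      rw [hPesucc i hi]
      exact (hmul (Pe i)).symm
    rw [congrArg α h2]
  set βv : F := ∏ i : Fin t, c0 ^ q ^ (i : ℕ) with hβvdef
  have hβne : βv ≠ 0 := by
    rw [hβvdef]
    exact Finset.prod_ne_zero_iff.mpr fun i _ => pow_ne_zero _ hc0ne
  have hBPw : B (α (P (-1))) = βv • α (P 0) := by
    rw [hstep]
    have h2 : (fun j => ∑ k, M j k * P (-1) k) = ef (gE * Pe (-1)) := (hmul (Pe (-1))).symm
    rw [congrArg α h2, hPewrap]
    have h3 : ef (algebraMap F E c0) = c0 • P 0 := by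
      rw [show algebraMap F E c0 = algebraMap F E c0 * 1 from (mul_one _).symm, hefsmul]
      rw [hPdef]
      simp only [hPe0]
    rw [congrArg α h3, hαsmul]
  -- the point properties
  have hPne : ∀ i, P i ≠ 0 := by
    intro i h
    exact hPene i ((LinearEquiv.map_eq_zero_iff ef).mp h)
  have hPprop : ∀ i j : ZMod n, i ≠ j → ∀ c : F, P i ≠ c • P j := by
    intro i j hij c hceq
    have hcne : c ≠ 0 := by
      rintro rfl
      apply hPne i
      rw [hceq, zero_smul]
    have hE2 : Pe i = algebraMap F E c * Pe j := by
      apply ef.injective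
      rw [hefsmul]
      exact hceq
    have hcEne : algebraMap F E c ≠ 0 := fun h =>
      hcne ((algebraMap F E).injective (by rw [h, map_zero]))
    set cu : Eˣ := Units.mk0 _ hcEne with hcudef
    have hu2 : g ^ i.val = cu * g ^ j.val := by
      apply Units.ext
      rw [Units.val_mul, hcudef, Units.val_mk0]
      exact hE2
    have hjN : j.val ≤ N := le_trans (le_of_lt (ZMod.val_lt j))
      (by rw [hNn]; exact Nat.le_mul_of_pos_right n (by omega))
    have hinv : (g ^ j.val)⁻¹ = g ^ (N - j.val) := by
      apply inv_eq_of_mul_eq_one_right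
      rw [← pow_add]
      rw [show j.val + (N - j.val) = N by omega, hgN]
    have hcu2 : cu = g ^ (i.val + (N - j.val)) := by
      have h5 : cu = g ^ i.val * (g ^ j.val)⁻¹ := by
        rw [hu2, mul_inv_cancel_right]
      rw [h5, hinv, ← pow_add]
    have hpow1 : cu ^ (q ^ t - 1) = 1 := by
      apply Units.ext
      rw [Units.val_pow_eq_pow_val, hcudef, Units.val_mk0, Units.val_one, ← map_pow]
      rw [← hF, FiniteField.pow_card_sub_one_eq_one c hcne, map_one]
    have hdvd2 : N ∣ (i.val + (N - j.val)) * (q ^ t - 1) := by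
      have h6 : g ^ ((i.val + (N - j.val)) * (q ^ t - 1)) = 1 := by
        rw [pow_mul, ← hcu2, hpow1]
      have h7 := orderOf_dvd_of_pow_eq_one h6
      rwa [horder] at h7
    have hdvd3 : n ∣ i.val + (N - j.val) := by
      have h8 := hdvd2
      rw [hNn] at h8
      have h9 := (Nat.mul_dvd_mul_iff_right (by omega : 0 < q ^ t - 1)).mp h8
      rwa [← hNn] at h9
    apply hij
    have hmod : i.val ≡ j.val [MOD n] := by
      have h4 : (i.val + (N - j.val)) ≡ 0 [MOD n] :=
        ((Nat.modEq_zero_iff_dvd).mpr hdvd3)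
      have h5 : N ≡ 0 [MOD n] := (Nat.modEq_zero_iff_dvd).mpr ⟨q ^ t - 1, hNn⟩
      calc i.val = i.val + 0 := by omega
        _ ≡ i.val + N [MOD n] := Nat.ModEq.add_left _ h5.symm
        _ = (i.val + (N - j.val)) + j.val := by omega
        _ ≡ 0 + j.val [MOD n] := Nat.ModEq.add_right _ h4
        _ = j.val := by omega
    have hvv : i.val = j.val := by
      rw [Nat.ModEq, Nat.mod_eq_of_lt (ZMod.val_lt i), Nat.mod_eq_of_lt (ZMod.val_lt j)] at hmod
      exact hmod
    exact ZMod.val_injective n hvv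
  have hPcover : ∀ v : Fin r → F, v ≠ 0 → ∃ i, ∃ c : F, v = c • P i := by
    intro v hv
    have hx : ef.symm v ≠ 0 := by
      intro h
      apply hv
      rw [← ef.apply_symm_apply v, h, map_zero]
    obtain ⟨k, hk⟩ : ∃ k : ℕ, g ^ k = Units.mk0 _ hx := by
      have h1 := hg (Units.mk0 _ hx)
      rwa [← mem_powers_iff_mem_zpowers, Submonoid.mem_powers_iff] at h1
    refine ⟨((k % n : ℕ) : ZMod n), c0 ^ (k / n), ?_⟩
    have hival : (((k % n : ℕ) : ZMod n)).val = k % n :=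
      ZMod.val_cast_of_lt (Nat.mod_lt _ hnpos)
    have hx2 : ef.symm v = algebraMap F E (c0 ^ (k / n)) * Pe ((k % n : ℕ) : ZMod n) := by
      have h2 : ((Units.mk0 _ hx : Eˣ) : E) = ef.symm v := rfl
      rw [← h2, ← hk]
      simp only [hPedef, hival]
      rw [map_pow, hc0]
      rw [← Units.val_pow_eq_pow_val, ← Units.val_mul, ← pow_mul, ← pow_add, Nat.div_add_mod]
    have h3 := congrArg ef hx2
    rw [ef.apply_symm_apply, hefsmul] at h3
    exact h3
  -- conclusion
  refine ⟨P, Units.mk0 βv hβne, hPne, hPprop, hPcover, ?_⟩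
  intro w hw
  have hBw := hBsum w (fun i => α (P i))
  rw [hw, hB0] at hBw
  have hre : ∑ j : ZMod n, (if j = 0 then ((Units.mk0 βv hβne : Fˣ) : F) * w (-1) else w (j - 1)) • α (P j)
      = ∑ i : ZMod n, (if i = -1 then βv * w (-1) else w i) • α (P (i + 1)) := by
    rw [← Equiv.sum_comp (Equiv.addRight (1 : ZMod n))
      (fun j => (if j = 0 then ((Units.mk0 βv hβne : Fˣ) : F) * w (-1) else w (j - 1)) • α (P j))]
    refine Finset.sum_congr rfl fun i _ => ?_
    simp only [Equiv.coe_addRight]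
    congr 1
    by_cases hi : i = -1
    · subst hi
      simp only [neg_add_cancel, ↓reduceIte, Units.val_mk0]
    · have h1 : i + 1 ≠ 0 := fun h => hi (eq_neg_of_add_eq_zero_left h)
      simp only [if_neg h1, if_neg hi, add_sub_cancel_right]
  have hfin : ∑ i : ZMod n, (if i = -1 then βv * w (-1) else w i) • α (P (i + 1))
      = ∑ i : ZMod n, w i • B (α (P i)) := by
    refine Finset.sum_congr rfl fun i _ => ?_
    by_cases hi : i = -1
    · subst hi
      rw [if_pos rfl, hBPw, neg_add_cancel, smul_smul, mul_comm]
    · rw [if_neg hi, hBP1 i hi]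
  rw [hre, hfin]
  exact hBw.symm
end

section
/- Assume t < q and let m = q^{t(r−1)} − 1. There exist a vector O : Fin r → F with O(0) ≠ 0 and a family P : ZMod m → (Fin r → F) of nonzero vectors, each with P(i)(0) ≠ 0, pairwise non-proportional over F and none proportional to O, such that every vector x : Fin r → F with x(0) ≠ 0 is proportional to O or to some P(i), and such that the punctured code {w : ZMod m → F | ∑_i w(i) • α(P(i)) = 0} is cyclic: if w belongs to the code then so does the cyclic shift w′(i) = w(i − 1). -/
open Finset in
lemma aux_expand {F : Type*} [CommSemiring F] (p : ℕ) [ExpChar F p] (q k : ℕ) (hq : q = p ^ k)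
    {t r : ℕ} (A : Fin r → Fin r → F) (v : Fin r → F) (f : Fin t → Fin r) :
    ∏ i : Fin t, (∑ b : Fin r, A (f i) b * v b) ^ q ^ (i : ℕ)
      = ∑ h : Fin t → Fin r, (∏ i : Fin t, A (f i) (h i) ^ q ^ (i : ℕ))
          * ∏ i : Fin t, v (h i) ^ q ^ (i : ℕ) := by
  subst hq
  simp_rw [← pow_mul, sum_pow_char_pow, mul_pow]
  classical
  rw [Finset.prod_univ_sum]
  rw [Fintype.piFinset_univ]
  exact Finset.sum_congr rfl fun h _ => Finset.prod_mul_distrib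

open Polynomial in
lemma aux_cardE {F : Type u} [Field F] [Fintype F] (s : ℕ) (hs : s ≠ 0) :
    ∃ (E : Type u) (_ : Field E) (_ : Algebra F E) (_ : Fintype E),
      Fintype.card E = (Fintype.card F) ^ s ∧ FiniteDimensional F E := by
  classical
  set Q := Fintype.card F with hQ
  have hQ1 : 1 < Q := Fintype.one_lt_card
  have hQs1 : 1 < Q ^ s := Nat.one_lt_pow hs hQ1
  obtain ⟨p, hp_char⟩ := CharP.exists F
  haveI := hp_char
  obtain ⟨n, hp_prime, hcard⟩ := FiniteField.card F p
  haveI : Fact p.Prime := ⟨hp_prime⟩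
  haveI : ExpChar F p := ExpChar.prime hp_prime
  set g_poly : F[X] := X ^ Q ^ s - X with hg
  set E := SplittingField g_poly with hE
  haveI : FiniteDimensional F E := IsSplittingField.finiteDimensional _ g_poly
  haveI : Finite E := Module.finite_of_finite F
  letI : Fintype E := Fintype.ofFinite E
  haveI : CharP E p := charP_of_injective_algebraMap (algebraMap F E).injective p
  haveI : ExpChar E p := ExpChar.prime hp_prime
  refine ⟨E, inferInstance, inferInstance, inferInstance, ?_, inferInstance⟩
  have hpQ : p ∣ Q ^ s := by
    refine dvd_pow ?_ hs
    rw [hQ, hcard]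
    exact dvd_pow_self p n.2.ne'
  have hsep : g_poly.Separable := galois_poly_separable p (Q ^ s) hpQ
  have aux : g_poly ≠ 0 := FiniteField.X_pow_card_sub_X_ne_zero F hQs1
  have key : Fintype.card (g_poly.rootSet E) = g_poly.natDegree :=
    card_rootSet_eq_natDegree hsep (SplittingField.splits g_poly)
  have natdeg : g_poly.natDegree = Q ^ s := FiniteField.X_pow_card_sub_X_natDegree_eq F hQs1
  have hQpow : Q ^ s = p ^ ((n : ℕ) * s) := by rw [hQ, hcard, pow_mul]
  set φ : E →ₐ[F] E :=
    { toRingHom := iterateFrobenius E p ((n : ℕ) * s)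
      commutes' := fun c => by
        show iterateFrobenius E p ((n : ℕ) * s) (algebraMap F E c) = algebraMap F E c
        rw [iterateFrobenius_def, ← hQpow, ← map_pow, hQ, FiniteField.pow_card_pow] } with hφ
  have hroot : ∀ x : E, x ^ Q ^ s = x := by
    have hle : Algebra.adjoin F (g_poly.rootSet E) ≤ AlgHom.equalizer φ (AlgHom.id F E) := by
      apply Algebra.adjoin_le
      intro x hx
      rw [mem_rootSet_of_ne aux] at hx
      simp only [hg, map_sub, map_pow, aeval_X, sub_eq_zero] at hx
      show φ x = x
      rw [hφ]
      simpa [iterateFrobenius_def, ← hQpow] using hx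
    rw [IsSplittingField.adjoin_rootSet] at hle
    intro x
    have hx : φ x = x := hle (Algebra.mem_top (A := E) (x := x))
    rw [hφ] at hx
    simpa [iterateFrobenius_def, ← hQpow] using hx
  have huniv : g_poly.rootSet E = Set.univ := by
    rw [Set.eq_univ_iff_forall]
    intro x
    rw [mem_rootSet_of_ne aux]
    simp [hg, sub_eq_zero, hroot x]
  have key' : Nat.card (g_poly.rootSet E) = Q ^ s := by
    rw [Nat.card_eq_fintype_card, key, natdeg]
  rw [huniv] at key'
  rwa [Nat.card_coe_set_eq, Set.ncard_univ, Nat.card_eq_fintype_card] at key'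

/-- **The punctured code is cyclic.** Assume `t < q` and let `m = q^{t(r-1)} - 1`.
Puncturing `C_{r,t}` at the points of the hyperplane `x 0 = 0` and at one further
point `O` off that hyperplane yields a code which is cyclic: there are `O` and an
enumeration `P : ZMod m → (Fin r → F)` of the remaining points (ordered by an affine
Singer cycle) such that the code `{w | ∑ i, w i • α (P i) = 0}` is closed under the
cyclic shift `w' i = w (i - 1)`. -/
theorem stmt_16
    (q t r m : ℕ) (ht : 1 ≤ t) (hr : 2 ≤ r) (hq : t < q) [NeZero m]
    (F : Type*) [Field F] [Fintype F] (hF : Fintype.card F = q ^ t)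
    (α : (Fin r → F) → (Fin t → Fin r) → F)
    (hα : ∀ v f, α v f = ∏ i : Fin t, v (f i) ^ q ^ (i : ℕ))
    (hm : m = q ^ (t * (r - 1)) - 1) :
    ∃ (O : Fin r → F) (P : ZMod m → (Fin r → F)),
      O ⟨0, by omega⟩ ≠ 0 ∧
      (∀ i, P i ≠ 0) ∧
      (∀ i, P i ⟨0, by omega⟩ ≠ 0) ∧
      (∀ i j, i ≠ j → ∀ c : F, P i ≠ c • P j) ∧
      (∀ i, ∀ c : F, P i ≠ c • O) ∧
      (∀ x : Fin r → F, x ⟨0, by omega⟩ ≠ 0 →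
        (∃ c : F, x = c • O) ∨ ∃ i, ∃ c : F, x = c • P i) ∧
      (∀ w : ZMod m → F, ∑ i, w i • α (P i) = 0 →
        ∑ i, w (i - 1) • α (P i) = 0) := by
  classical
  obtain ⟨s, rfl⟩ : ∃ s, r = s + 1 := ⟨r - 1, by omega⟩
  have hs : s ≠ 0 := by omega
  have hm' : m = q ^ (t * s) - 1 := by simpa using hm
  -- characteristic facts
  obtain ⟨p, hp_char⟩ := CharP.exists F
  haveI := hp_char
  obtain ⟨n, hp_prime, hcard⟩ := FiniteField.card F p
  haveI : Fact p.Prime := ⟨hp_prime⟩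
  haveI : ExpChar F p := ExpChar.prime hp_prime
  obtain ⟨k, hkle, hqk⟩ := (Nat.dvd_prime_pow hp_prime).mp
    (show q ∣ p ^ (n : ℕ) by rw [← hcard, hF]; exact dvd_pow_self q (by omega))
  -- the field extension of degree s
  obtain ⟨E, _, _, _, hcardE, _⟩ := aux_cardE (F := F) s hs
  have hcardE' : Fintype.card E = q ^ (t * s) := by rw [hcardE, hF, ← pow_mul]
  have hcardEu : Fintype.card Eˣ = m := by
    rw [Fintype.card_units, hcardE', hm']
  -- a generator of the multiplicative group
  obtain ⟨g, hg⟩ := IsCyclic.exists_generator (α := Eˣ)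
  have horder : orderOf g = m := by
    rw [orderOf_eq_card_of_forall_mem_zpowers hg, Nat.card_eq_fintype_card, hcardEu]
  -- the Singer cycle
  set χ : ZMod m → Eˣ := fun i => g ^ i.val with hχ
  have hχsucc : ∀ i, χ (i + 1) = g * χ i := by
    intro i
    have hmod : ((i + 1 : ZMod m)).val ≡ i.val + 1 [MOD m] := by
      have h1 : ((i + 1 : ZMod m)).val = (i.val + (1 : ZMod m).val) % m := ZMod.val_add i 1
      have h2 : (1 : ZMod m).val ≡ 1 [MOD m] := by
        rw [← Nat.cast_one (R := ZMod m), ZMod.val_natCast]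
        exact Nat.mod_modEq 1 m
      rw [h1]
      exact (Nat.mod_modEq _ m).trans (Nat.ModEq.add_left _ h2)
    have hpow : g ^ ((i + 1 : ZMod m)).val = g ^ (i.val + 1) := by
      rw [pow_eq_pow_iff_modEq, horder]; exact hmod
    simp only [hχ]
    rw [hpow, pow_succ]
    exact mul_comm _ _
  have hχinj : Function.Injective χ := by
    intro i j hij
    simp only [hχ] at hij
    have h1 : i.val ≡ j.val [MOD m] := by
      have h0 := pow_eq_pow_iff_modEq.mp hij
      rwa [horder] at h0
    have h2 : i.val = j.val := by
      unfold Nat.ModEq at h1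
      rwa [Nat.mod_eq_of_lt (ZMod.val_lt i), Nat.mod_eq_of_lt (ZMod.val_lt j)] at h1
    exact ZMod.val_injective m h2
  have hχbij : Function.Bijective χ :=
    (Fintype.bijective_iff_injective_and_card χ).mpr ⟨hχinj, by rw [ZMod.card, hcardEu]⟩
  -- coordinates with respect to a basis
  have hrank : Module.finrank F E = s := by
    have h1 : Fintype.card E = Fintype.card F ^ Module.finrank F E := Module.card_eq_pow_finrank
    rw [hcardE] at h1
    exact Nat.pow_right_injective Fintype.one_lt_card h1.symm
  set b : Module.Basis (Fin s) F E := Module.finBasisOfFinrankEq F E hrank with hb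
  set coord : E ≃ₗ[F] (Fin s → F) := b.equivFun with hcoord
  -- the points
  set P : ZMod m → (Fin (s+1) → F) := fun i => Fin.cons 1 (coord ((χ i : Eˣ) : E)) with hP
  set O : Fin (s+1) → F := Fin.cons 1 0 with hO
  have hzero : (⟨0, by omega⟩ : Fin (s + 1)) = 0 := by
    apply Fin.ext; simp
  -- the matrix of multiplication by g
  set M : Fin s → Fin s → F := fun kk jj => coord ((g : E) * b jj) kk with hM
  have hMe : ∀ (e : E) (kk : Fin s), coord ((g : E) * e) kk = ∑ jj, M kk jj * coord e jj := by
    intro e kk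
    have he : e = ∑ jj, coord e jj • b jj := by
      have h1 : coord.symm (coord e) = e := coord.symm_apply_apply e
      conv_lhs => rw [← h1]
      rw [hcoord]
      exact b.equivFun_symm_apply (b.equivFun e)
    calc coord ((g : E) * e) kk
        = coord ((g : E) * ∑ jj, coord e jj • b jj) kk := by rw [← he]
      _ = coord (∑ jj, coord e jj • ((g : E) * b jj)) kk := by
          rw [Finset.mul_sum]; simp_rw [mul_smul_comm]
      _ = ∑ jj, coord e jj * coord ((g : E) * b jj) kk := by
          rw [map_sum, Finset.sum_apply]
          simp only [map_smul, Pi.smul_apply, smul_eq_mul]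
      _ = ∑ jj, M kk jj * coord e jj := by
          exact Finset.sum_congr rfl fun jj _ => by rw [hM]; exact mul_comm _ _
  set A : Fin (s+1) → Fin (s+1) → F := Fin.cons (Fin.cons 1 0) (fun kk => Fin.cons 0 (M kk))
    with hA
  have hAP : ∀ (i : ZMod m) (a : Fin (s+1)), P (i + 1) a = ∑ bb, A a bb * P i bb := by
    intro i a
    induction a using Fin.cases with
    | zero =>
        rw [Fin.sum_univ_succ]
        simp [hA, hP]
    | succ kk =>
        have h1 : ((χ (i + 1) : Eˣ) : E) = (g : E) * ((χ i : Eˣ) : E) := by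
          rw [hχsucc i, Units.val_mul]
        rw [Fin.sum_univ_succ]
        simp only [hP, hA, Fin.cons_succ, Fin.cons_zero, mul_one, zero_mul, zero_add]
        rw [h1, hMe]
  have hPA : ∀ (j : ZMod m) (f : Fin t → Fin (s+1)),
      α (P (j + 1)) f = ∑ hh : Fin t → Fin (s+1),
        (∏ i2 : Fin t, A (f i2) (hh i2) ^ q ^ (i2 : ℕ)) * α (P j) hh := by
    intro j f
    rw [hα]
    have hrepl : ∀ i2 : Fin t, P (j + 1) (f i2) = ∑ bb, A (f i2) bb * P j bb :=
      fun i2 => hAP j (f i2)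
    simp_rw [hrepl]
    rw [aux_expand p q k hqk A (P j) f]
    exact Finset.sum_congr rfl fun hh _ => by rw [hα]
  refine ⟨O, P, ?_, ?_, ?_, ?_, ?_, ?_, ?_⟩
  · rw [hzero]
    simp [hO]
  · intro i h
    have := congrFun h 0
    simp [hP] at this
  · intro i
    rw [hzero]
    simp [hP]
  · intro i j hij c hc
    have h0 := congrFun hc 0
    simp only [hP, Pi.smul_apply, smul_eq_mul, Fin.cons_zero, mul_one] at h0
    have htail : ∀ kk : Fin s, coord ((χ i : Eˣ) : E) kk = coord ((χ j : Eˣ) : E) kk := by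
      intro kk
      have h1 := congrFun hc (Fin.succ kk)
      simp only [hP, Pi.smul_apply, smul_eq_mul, Fin.cons_succ] at h1
      rw [h1, ← h0, one_mul]
    have heq : ((χ i : Eˣ) : E) = ((χ j : Eˣ) : E) := coord.injective (funext htail)
    exact hij (hχinj (Units.ext heq))
  · intro i c hc
    have htail : ∀ kk : Fin s, coord ((χ i : Eˣ) : E) kk = 0 := by
      intro kk
      have h1 := congrFun hc (Fin.succ kk)
      simp only [hP, hO, Pi.smul_apply, smul_eq_mul, Fin.cons_succ, Pi.zero_apply,
        mul_zero] at h1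
      exact h1
    have h2 : coord ((χ i : Eˣ) : E) = 0 := funext htail
    have h3 : ((χ i : Eˣ) : E) = 0 := by
      simpa using coord.map_eq_zero_iff.mp h2
    exact Units.ne_zero (χ i) h3
  · intro x hx
    rw [hzero] at hx
    set c := x 0 with hcdef
    set y : Fin s → F := fun kk => c⁻¹ * x (Fin.succ kk) with hy
    by_cases he : coord.symm y = 0
    · left
      refine ⟨c, funext fun a => ?_⟩
      refine Fin.cases ?_ ?_ a
      · simp only [hO, Pi.smul_apply, smul_eq_mul, Fin.cons_zero, mul_one]
        exact hcdef.symm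
      · intro kk
        have hy0 : y = 0 := by
          simpa using coord.symm.injective (by rw [he, map_zero])
        have hxk : x (Fin.succ kk) = c * y kk := by
          rw [hy]
          rw [mul_inv_cancel_left₀ hx]
        rw [hxk, hy0]
        simp [hO]
    · right
      obtain ⟨i, hi⟩ := hχbij.2 (Units.mk0 (coord.symm y) he)
      refine ⟨i, c, funext fun a => ?_⟩
      refine Fin.cases ?_ ?_ a
      · simp only [hP, Pi.smul_apply, smul_eq_mul, Fin.cons_zero, mul_one]
        exact hcdef.symm
      · intro kk
        have h1 : ((χ i : Eˣ) : E) = coord.symm y := by rw [hi]; rfl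
        simp only [hP, Pi.smul_apply, smul_eq_mul, Fin.cons_succ, h1,
          coord.apply_symm_apply]
        rw [hy]
        rw [mul_inv_cancel_left₀ hx]
  · intro w hw
    have hw' : ∀ hfun : Fin t → Fin (s+1), ∑ i, w i * α (P i) hfun = 0 := by
      intro hfun
      have := congrFun hw hfun
      simpa [Finset.sum_apply] using this
    funext f
    simp only [Finset.sum_apply, Pi.smul_apply, smul_eq_mul, Pi.zero_apply]
    have hre := Fintype.sum_equiv (Equiv.addRight (1 : ZMod m))
      (fun j => w j * α (P (j + 1)) f) (fun i2 => w (i2 - 1) * α (P i2) f)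
      (by intro j; simp)
    rw [← hre]
    have hstep : ∀ j : ZMod m, w j * α (P (j + 1)) f
        = ∑ hh : Fin t → Fin (s+1),
            (∏ i2 : Fin t, A (f i2) (hh i2) ^ q ^ (i2 : ℕ)) * (w j * α (P j) hh) := by
      intro j
      rw [hPA j f, Finset.mul_sum]
      exact Finset.sum_congr rfl fun hh _ => by ring
    simp_rw [hstep]
    rw [Finset.sum_comm]
    refine Finset.sum_eq_zero fun hh _ => ?_
    rw [← Finset.mul_sum, hw' hh, mul_zero]
end

section
/- Assume t < q. The F-linear span of the α-image of the K-subgeometry, i.e., of the set {α(ι ∘ v) : v : Fin r → K, where ι : K → F is the inclusion}, has F-dimension exactly C(r−1+t, t) (the binomial coefficient). Equivalently, the image under α of a subgeometry PG(r−1, q) of PG(r−1, q^t) is a Veronese variety V(r−1, t) spanning a subspace of projective dimension C(r−1+t, t) − 1. -/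
open Finset in
/-- Monomial functions with bounded exponents on a grid `S^n` are linearly independent:
if a linear combination of distinct monomials (exponents `< N ≤ #S`) vanishes on `S^n`,
all coefficients vanish. -/
private lemma grid_zero (F : Type*) [Field F] (S : Finset F) :
    ∀ (n : ℕ) (ι : Type) [Fintype ι] (D : ι → Fin n → ℕ), Function.Injective D →
      ∀ (N : ℕ), N ≤ S.card → (∀ a j, D a j < N) → ∀ (c : ι → F),
      (∀ v : Fin n → F, (∀ j, v j ∈ S) → ∑ a, c a * ∏ j, v j ^ D a j = 0) →
      ∀ a, c a = 0 := by
  intro n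
  induction n with
  | zero =>
    intro ι _ D hD N hN hb c hz a
    have huniv : (univ : Finset ι) = {a} := by
      ext b
      simp only [mem_univ, mem_singleton, true_iff]
      exact hD (funext fun j => j.elim0)
    have := hz (fun j => j.elim0) (fun j => j.elim0)
    rw [huniv] at this
    simpa using this
  | succ n ih =>
    intro ι _ D hD N hN hb c hz a
    classical
    -- fiberwise coefficient functions
    set g : ℕ → (Fin n → F) → F := fun e v' =>
      ∑ b ∈ univ.filter (fun b => D b 0 = e), c b * ∏ j : Fin n, v' j ^ D b j.succ with hg
    have key : ∀ (v' : Fin n → F), (∀ j, v' j ∈ S) → ∀ e ∈ range N, g e v' = 0 := by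
      intro v' hv' e he
      set P : Polynomial F := ∑ e ∈ range N, Polynomial.C (g e v') * Polynomial.X ^ e with hP
      have heval : ∀ x ∈ S, P.eval x = 0 := by
        intro x hx
        have hgrid : ∀ j, (Fin.cons x v' : Fin (n+1) → F) j ∈ S := by
          intro j
          refine Fin.cases ?_ ?_ j
          · simpa using hx
          · intro i; simpa using hv' i
        have h0 := hz (Fin.cons x v') hgrid
        have hsplit : ∀ b : ι, c b * ∏ j : Fin (n+1), (Fin.cons x v' : Fin (n+1) → F) j ^ D b j
            = (c b * ∏ j : Fin n, v' j ^ D b j.succ) * x ^ D b 0 := by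
          intro b
          rw [Fin.prod_univ_succ]
          simp only [Fin.cons_zero, Fin.cons_succ]
          ring
        rw [Finset.sum_congr rfl (fun b _ => hsplit b)] at h0
        have hfib := Finset.sum_fiberwise_of_maps_to (s := (Finset.univ : Finset ι))
          (g := fun b => D b 0) (t := range N)
          (fun b _ => Finset.mem_range.2 (hb b 0))
          (fun b => (c b * ∏ j : Fin n, v' j ^ D b j.succ) * x ^ D b 0)
        rw [← hfib] at h0
        have : P.eval x = ∑ e ∈ range N, g e v' * x ^ e := by
          simp [hP, Polynomial.eval_finset_sum]
        rw [this, ← h0]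
        refine Finset.sum_congr rfl fun e _ => ?_
        rw [hg, Finset.sum_mul]
        refine Finset.sum_congr rfl fun b hbmem => ?_
        rw [(Finset.mem_filter.1 hbmem).2]
      have hPdeg : P.degree < (N : WithBot ℕ) := by
        refine lt_of_le_of_lt (Polynomial.degree_sum_le _ _) ?_
        rw [Finset.sup_lt_iff (by exact_mod_cast WithBot.bot_lt_coe N)]
        intro e he'
        refine lt_of_le_of_lt (Polynomial.degree_C_mul_X_pow_le _ _) ?_
        exact_mod_cast Finset.mem_range.1 he'
      have hP0 : P = 0 := by
        by_cases h : P = 0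
        · exact h
        · refine Polynomial.eq_zero_of_natDegree_lt_card_of_eval_eq_zero' P S heval ?_
          exact lt_of_lt_of_le ((Polynomial.natDegree_lt_iff_degree_lt h).2 hPdeg) hN
      -- extract coefficient e
      have hcoeff : P.coeff e = g e v' := by
        rw [hP, Polynomial.finset_sum_coeff]
        rw [Finset.sum_eq_single e]
        · simp
        · intro e' _ hne
          simp [Polynomial.coeff_C_mul, Polynomial.coeff_X_pow, Ne.symm hne]
        · intro h; exact absurd he h
      rw [← hcoeff, hP0]
      simp
    -- apply induction hypothesis on the fiber of `a`
    set e0 := D a 0 with he0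
    let ι' : Type := {b : ι // D b 0 = e0}
    letI : Fintype ι' := Subtype.fintype _
    have hres := ih ι' (fun b j => D b.1 j.succ)
      (by
        intro b₁ b₂ h
        apply Subtype.ext
        apply hD
        funext j
        refine Fin.cases ?_ ?_ j
        · rw [b₁.2, b₂.2]
        · intro i; exact congrFun h i)
      N hN (fun b j => hb b.1 j.succ) (fun b => c b.1)
      (by
        intro v' hv'
        have h2 : ∑ b ∈ Finset.univ.filter (fun b => D b 0 = e0),
            c b * ∏ j : Fin n, v' j ^ D b j.succ = 0 := by
          simpa [hg] using key v' hv' e0 (Finset.mem_range.2 (hb a 0))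
        calc (∑ b : ι', c b.1 * ∏ j : Fin n, v' j ^ D b.1 j.succ)
            = ∑ b ∈ Finset.univ.filter (fun b => D b 0 = e0),
              c b * ∏ j : Fin n, v' j ^ D b j.succ :=
              (Finset.sum_subtype (p := fun b => D b 0 = e0)
                (Finset.univ.filter (fun b => D b 0 = e0)) (fun x => by simp)
                (fun b => c b * ∏ j : Fin n, v' j ^ D b j.succ)).symm
          _ = 0 := h2)
    exact hres ⟨a, rfl⟩

/-- **The `α`-image of a `K`-subgeometry is a Veronese variety.** Assume `t < q`.
The `F`-linear span of `{α (ι ∘ v) | v : Fin r → K}` has dimension exactly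
`C(r-1+t, t)`; i.e. the image under `α` of a subgeometry `PG(r-1, q)` of
`PG(r-1, q^t)` is a Veronese variety `V(r-1, t)` spanning a subspace of projective
dimension `C(r-1+t, t) - 1`. -/
theorem stmt_18
    (q t r : ℕ) (ht : 1 ≤ t) (hr : 2 ≤ r) (hq : t < q)
    (F : Type*) [Field F] [Fintype F] (hF : Fintype.card F = q ^ t)
    (K : Subfield F) (hK : Nat.card K = q)
    (α : (Fin r → F) → (Fin t → Fin r) → F)
    (hα : ∀ v f, α v f = ∏ i : Fin t, v (f i) ^ q ^ (i : ℕ)) :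
    Module.finrank F
      ↥(Submodule.span F {x | ∃ v : Fin r → K, x = α (fun j => (v j : F))})
      = Nat.choose (r - 1 + t) t := by
  classical
  haveI : Fintype K := Fintype.ofFinite K
  have hKcard : Fintype.card K = q := by rw [← Nat.card_eq_fintype_card]; exact hK
  set S : Finset F := Finset.univ.image ((↑) : K → F) with hS
  have hScard : S.card = q := by
    rw [hS, Finset.card_image_of_injective _ Subtype.val_injective, Finset.card_univ, hKcard]
  -- the quotient map to multisets
  let Q : (Fin t → Fin r) → Sym (Fin r) t := fun f =>
    ⟨Multiset.map f Finset.univ.val, by simp⟩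
  have hQsurj : Function.Surjective Q := by
    intro m
    have hlen : m.1.toList.length = t := by rw [Multiset.length_toList]; exact m.2
    refine ⟨fun i => m.1.toList.get (Fin.cast hlen.symm i), ?_⟩
    apply Subtype.ext
    show Multiset.map (fun i => m.1.toList.get (Fin.cast hlen.symm i)) Finset.univ.val = m.1
    have h1 : (Finset.univ.val : Multiset (Fin t)) = ↑(List.finRange t) := rfl
    rw [h1]
    rw [show Multiset.map (fun i => m.1.toList.get (Fin.cast hlen.symm i))
        ↑(List.finRange t) = ↑(List.map (fun i => m.1.toList.get (Fin.cast hlen.symm i))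
        (List.finRange t)) from rfl]
    rw [← List.ofFn_eq_map]
    have hlist : (List.ofFn fun i => m.1.toList.get (Fin.cast hlen.symm i)) = m.1.toList := by
      apply List.ext_getElem
      · simp [hlen]
      · intro i h1' h2'
        simp [List.getElem_ofFn]
        rfl
    rw [hlist, Multiset.coe_toList]
  -- the "row" vectors indexed by multisets
  let ρ : (Fin r → K) → Sym (Fin r) t → F := fun v m =>
    ∏ j : Fin r, (v j : F) ^ Multiset.count j m.1
  have hαρ : ∀ v : Fin r → K, α (fun j => (v j : F)) = fun f => ρ v (Q f) := by
    intro v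
    funext f
    rw [hα]
    have h1 : ∀ i : Fin t, ((v (f i) : F)) ^ q ^ (i : ℕ) = (v (f i) : F) := by
      intro i
      have h2 : (v (f i)) ^ q ^ (i : ℕ) = v (f i) := by
        have := FiniteField.pow_card_pow (i : ℕ) (v (f i))
        rwa [hKcard] at this
      calc ((v (f i) : F)) ^ q ^ (i : ℕ) = (((v (f i)) ^ q ^ (i : ℕ) : K) : F) := by push_cast; ring
        _ = (v (f i) : F) := by rw [h2]
    rw [Finset.prod_congr rfl (fun i _ => h1 i)]
    calc ∏ i : Fin t, ((v (f i)) : F)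
        = ∏ j : Fin r, ∏ i ∈ Finset.univ.filter (fun i => f i = j), ((v (f i)) : F) :=
          (Finset.prod_fiberwise Finset.univ f _).symm
      _ = ∏ j : Fin r, ((v j : F)) ^ (Finset.univ.filter (fun i => f i = j)).card := by
          refine Finset.prod_congr rfl fun j _ => ?_
          rw [Finset.prod_congr rfl (fun i hi => by rw [(Finset.mem_filter.1 hi).2]),
            Finset.prod_const]
      _ = ρ v (Q f) := by
          refine Finset.prod_congr rfl fun j _ => ?_
          congr 1
          show (Finset.univ.filter (fun i => f i = j)).card
            = Multiset.count j (Multiset.map f Finset.univ.val)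
          rw [Multiset.count_map]
          rw [show (Finset.univ.filter (fun i => f i = j)).card
            = Multiset.card (Multiset.filter (fun i => f i = j) Finset.univ.val) from rfl]
          congr 1
          exact Multiset.filter_congr (fun i _ => by constructor <;> exact fun h => h.symm)
  -- rewrite the set as an image
  let P : ((Sym (Fin r) t → F) →ₗ[F] ((Fin t → Fin r) → F)) := LinearMap.funLeft F F Q
  have hPinj : Function.Injective P := LinearMap.funLeft_injective_of_surjective F F Q hQsurj
  have hset : {x | ∃ v : Fin r → K, x = α (fun j => (v j : F))}
      = P '' {x | ∃ v : Fin r → K, x = ρ v} := by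
    ext x
    constructor
    · rintro ⟨v, rfl⟩
      exact ⟨ρ v, ⟨v, rfl⟩, (hαρ v).symm⟩
    · rintro ⟨y, ⟨v, rfl⟩, rfl⟩
      exact ⟨v, (hαρ v).symm⟩
  -- span of the rows is everything
  have hspan : Submodule.span F {x | ∃ v : Fin r → K, x = ρ v} = ⊤ := by
    by_contra hne
    obtain ⟨φ, hφ0, hφ⟩ := Submodule.exists_dual_map_eq_bot_of_lt_top
      (lt_top_iff_ne_top.2 hne) inferInstance
    have hzφ : ∀ v : Fin r → K, φ (ρ v) = 0 := by
      intro v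
      rw [← Submodule.mem_bot F, ← hφ]
      exact Submodule.mem_map_of_mem (Submodule.subset_span ⟨v, rfl⟩)
    set c : Sym (Fin r) t → F := fun m => φ (Pi.single (M := fun _ => F) m 1) with hc
    have hφexp : ∀ y : Sym (Fin r) t → F, φ y = ∑ m, y m * c m := by
      intro y
      have h2 : ∀ m, Pi.single m (y m) = y m • (Pi.single m (1 : F) : Sym (Fin r) t → F) := by
        intro m
        funext m'
        by_cases h : m' = m <;> simp [Pi.single_apply, h]
      conv_lhs => rw [← Finset.univ_sum_single y]
      rw [map_sum]
      refine Finset.sum_congr rfl fun m _ => ?_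
      rw [h2 m, map_smul, smul_eq_mul]
    have hcz : ∀ m, c m = 0 := by
      refine grid_zero F S r (Sym (Fin r) t) (fun m j => Multiset.count j m.1) ?_ (t + 1)
        (by omega) (fun m j => by
          show Multiset.count j m.1 < t + 1
          have h1 : Multiset.count j m.1 ≤ Multiset.card m.1 := Multiset.count_le_card j m.1
          have h2 := m.2
          omega) c ?_
      · intro m₁ m₂ h
        apply Subtype.ext
        exact Multiset.ext.2 fun j => congrFun h j
      · intro v hv
        have hw : ∀ j, ∃ k : K, (k : F) = v j := by
          intro j
          have := hv j
          rw [hS, Finset.mem_image] at this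
          obtain ⟨k, _, hk⟩ := this
          exact ⟨k, hk⟩
        choose w hw using hw
        have : ρ w = fun m => ∏ j : Fin r, v j ^ Multiset.count j m.1 := by
          funext m
          exact Finset.prod_congr rfl fun j _ => by rw [hw j]
        have h0 := hzφ w
        rw [hφexp, this] at h0
        rw [← h0]
        exact Finset.sum_congr rfl fun m _ => mul_comm _ _
    apply hφ0
    apply LinearMap.ext
    intro y
    rw [hφexp]
    simp [hcz]
  rw [hset, Submodule.span_image]
  rw [← LinearEquiv.finrank_eq (Submodule.equivMapOfInjective P hPinj _)]
  rw [hspan, finrank_top, Module.finrank_pi]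
  rw [Sym.card_sym_eq_choose]
  rw [Fintype.card_fin]
  congr 1
  omega
end
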